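/- arXiv:2008.03489 — 2 statements merged into one kernel-verified Lean document; each statement's English description precedes it below -/
import Mathlib

section
/- If F and G are first-order sentences without equality such that F ⊨ G, then there exists an interpolant lifting base ⟨F, G, 𝔽, 𝔾, H_grd, F_exp, G_exp, θ⟩ whose first two components are F and G. -/
open Classical

namespace CTIF

/-- First-order terms: variables and applications of function symbols
(a function symbol is a natural number used with an arity). -/
inductive Tm : Type where
  | var : ℕ → Tm
  | app : ℕ → (n : ℕ) → (Fin n → Tm) → Tm

/-- First-order formulas without equality. -/
inductive Fml : Type where
  | tru : Fml
  | fls : Fml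
  | atom : ℕ → (n : ℕ) → (Fin n → Tm) → Fml
  | neg : Fml → Fml
  | conj : Fml → Fml → Fml
  | disj : Fml → Fml → Fml
  | all : ℕ → Fml → Fml
  | exi : ℕ → Fml → Fml

/-- A structure: interpretation of all function and predicate symbols (at every arity). -/
structure Struc (D : Type) : Type where
  fn : ℕ → (n : ℕ) → (Fin n → D) → D
  pr : ℕ → (n : ℕ) → (Fin n → D) → Prop

def Tm.eval {D : Type} (M : Struc D) (a : ℕ → D) : Tm → D
  | .var x => a x
  | .app f n ts => M.fn f n (fun i => (ts i).eval M a)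

def Fml.sat {D : Type} : Fml → Struc D → (ℕ → D) → Prop
  | .tru, _, _ => True
  | .fls, _, _ => False
  | .atom p n ts, M, a => M.pr p n (fun i => (ts i).eval M a)
  | .neg F, M, a => ¬ F.sat M a
  | .conj F G, M, a => F.sat M a ∧ G.sat M a
  | .disj F G, M, a => F.sat M a ∨ G.sat M a
  | .all x F, M, a => ∀ d, F.sat M (Function.update a x d)
  | .exi x F, M, a => ∃ d, F.sat M (Function.update a x d)

/-- Entailment: every model (with any variable assignment) of `F` satisfies `G`. -/
def entails (F G : Fml) : Prop :=
  ∀ (D : Type), Nonempty D → ∀ (M : Struc D) (a : ℕ → D), F.sat M a → G.sat M a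

def Tm.vars : Tm → Set ℕ
  | .var x => {x}
  | .app _ _ ts => ⋃ i, (ts i).vars

/-- Function symbols (with their arity) occurring in a term. -/
def Tm.funs : Tm → Set (ℕ × ℕ)
  | .var _ => ∅
  | .app f n ts => insert (f, n) (⋃ i, (ts i).funs)

def Tm.isGround (t : Tm) : Prop := t.vars = ∅

/-- `t` is a ground term all of whose function symbols come from `S`. -/
def Tm.builtFrom (S : Set (ℕ × ℕ)) : Tm → Prop
  | .var _ => False
  | .app f n ts => (f, n) ∈ S ∧ ∀ i, Tm.builtFrom S (ts i)

/-- `t` occurs (as a subterm) in the given term. -/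
def Tm.occursIn (t : Tm) : Tm → Prop
  | .var x => t = Tm.var x
  | .app f n ts => t = Tm.app f n ts ∨ ∃ i, Tm.occursIn t (ts i)

/-- `s` is a strict subterm of `t`. -/
def Tm.strictSub (s t : Tm) : Prop := s ≠ t ∧ s.occursIn t

def Fml.funs : Fml → Set (ℕ × ℕ)
  | .tru => ∅
  | .fls => ∅
  | .atom _ _ ts => ⋃ i, (ts i).funs
  | .neg F => F.funs
  | .conj F G => F.funs ∪ G.funs
  | .disj F G => F.funs ∪ G.funs
  | .all _ F => F.funs
  | .exi _ F => F.funs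

/-- Predicate symbols with the polarity (`true` = positive) of their occurrences;
the second argument is the polarity of the context. -/
def Fml.preds : Fml → Bool → Set (ℕ × Bool)
  | .tru, _ => ∅
  | .fls, _ => ∅
  | .atom p _ _, pol => {(p, pol)}
  | .neg F, pol => F.preds (!pol)
  | .conj F G, pol => F.preds pol ∪ G.preds pol
  | .disj F G, pol => F.preds pol ∪ G.preds pol
  | .all _ F, pol => F.preds pol
  | .exi _ F, pol => F.preds pol

/-- pred(F): predicates paired with the polarities of their occurrences in `F`. -/
def Fml.pred (F : Fml) : Set (ℕ × Bool) := F.preds true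

/-- Predicate symbols occurring in a formula (disregarding polarity). -/
def Fml.predSyms : Fml → Set ℕ
  | .tru => ∅
  | .fls => ∅
  | .atom p _ _ => {p}
  | .neg F => F.predSyms
  | .conj F G => F.predSyms ∪ G.predSyms
  | .disj F G => F.predSyms ∪ G.predSyms
  | .all _ F => F.predSyms
  | .exi _ F => F.predSyms

def Fml.free : Fml → Set ℕ
  | .tru => ∅
  | .fls => ∅
  | .atom _ _ ts => ⋃ i, (ts i).vars
  | .neg F => F.free
  | .conj F G => F.free ∪ G.free
  | .disj F G => F.free ∪ G.free
  | .all x F => F.free \ {x}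
  | .exi x F => F.free \ {x}

/-- Variables occurring bound (i.e. quantified upon) in a formula. -/
def Fml.bound : Fml → Set ℕ
  | .tru => ∅
  | .fls => ∅
  | .atom _ _ _ => ∅
  | .neg F => F.bound
  | .conj F G => F.bound ∪ G.bound
  | .disj F G => F.bound ∪ G.bound
  | .all x F => insert x F.bound
  | .exi x F => insert x F.bound

def Fml.isQF : Fml → Prop
  | .tru => True
  | .fls => True
  | .atom _ _ _ => True
  | .neg F => F.isQF
  | .conj F G => F.isQF ∧ G.isQF
  | .disj F G => F.isQF ∧ G.isQF
  | .all _ _ => False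
  | .exi _ _ => False

def Fml.isGround (F : Fml) : Prop := F.isQF ∧ F.free = ∅

def Fml.isSentence (F : Fml) : Prop := F.free = ∅

/-- Substitutions: mappings from variables to terms. -/
abbrev Subst := ℕ → Tm

def Subst.dom (σ : Subst) : Set ℕ := {x | σ x ≠ Tm.var x}

def Subst.rng (σ : Subst) : Set Tm := {t | ∃ x ∈ σ.dom, σ x = t}

def Subst.isGround (σ : Subst) : Prop := ∀ x ∈ σ.dom, (σ x).isGround

/-- Injective substitution: distinct domain variables are mapped to distinct terms. -/
def Subst.inj (σ : Subst) : Prop := ∀ x ∈ σ.dom, ∀ y ∈ σ.dom, σ x = σ y → x = y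

def Tm.subst (σ : Subst) : Tm → Tm
  | .var x => σ x
  | .app f n ts => .app f n (fun i => (ts i).subst σ)

/-- Substitution application to formulas (free occurrences of variables are replaced). -/
def Fml.subst (σ : Subst) : Fml → Fml
  | .tru => .tru
  | .fls => .fls
  | .atom p n ts => .atom p n (fun i => (ts i).subst σ)
  | .neg F => .neg (F.subst σ)
  | .conj F G => .conj (F.subst σ) (G.subst σ)
  | .disj F G => .disj (F.subst σ) (G.subst σ)
  | .all x F => .all x (F.subst (Function.update σ x (Tm.var x)))
  | .exi x F => .exi x (F.subst (Function.update σ x (Tm.var x)))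

/-- Inverse application of an injective substitution to a term:
all rng(σ)-maximal occurrences of terms in the range of σ are replaced by
the corresponding domain variable. -/
noncomputable def Tm.inv (σ : Subst) : Tm → Tm
  | .var x =>
      if h : ∃ v ∈ Subst.dom σ, σ v = Tm.var x then Tm.var h.choose else Tm.var x
  | .app f n ts =>
      if h : ∃ v ∈ Subst.dom σ, σ v = Tm.app f n ts then Tm.var h.choose
      else .app f n (fun i => Tm.inv σ (ts i))

/-- Inverse application of an injective substitution to a formula. -/
noncomputable def Fml.inv (σ : Subst) : Fml → Fml
  | .tru => .tru
  | .fls => .fls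
  | .atom p n ts => .atom p n (fun i => Tm.inv σ (ts i))
  | .neg F => .neg (F.inv σ)
  | .conj F G => .conj (F.inv σ) (G.inv σ)
  | .disj F G => .disj (F.inv σ) (G.inv σ)
  | .all x F => .all x (F.inv σ)
  | .exi x F => .exi x (F.inv σ)

/-- `H` is a Craig-Lyndon interpolant of `F` and `G`. -/
def CLInterp (F G H : Fml) : Prop :=
  entails F H ∧ entails H G ∧
  H.pred ⊆ F.pred ∩ G.pred ∧
  H.funs ⊆ F.funs ∩ G.funs ∧
  H.free ⊆ F.free ∩ G.free

/-- `H` is a Craig interpolant of `F` and `G` (no polarity constraint). -/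
def CraigInterp (F G H : Fml) : Prop :=
  entails F H ∧ entails H G ∧
  H.predSyms ⊆ F.predSyms ∩ G.predSyms ∧
  H.funs ⊆ F.funs ∩ G.funs ∧
  H.free ⊆ F.free ∩ G.free

/-- An S-term: a term whose outermost function symbol is in `S`. -/
def isSTerm (S : Set (ℕ × ℕ)) : Tm → Prop
  | .var _ => False
  | .app f n _ => (f, n) ∈ S

def STerms (S : Set (ℕ × ℕ)) : Set Tm := {t | isSTerm S t}

/-- `t` has a `T`-maximal occurrence in the given term: an occurrence that is
not within an occurrence of another member of `T`. -/
def Tm.hasMaxOcc (T : Set Tm) (t : Tm) : Tm → Prop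
  | .var x => Tm.var x ∈ T ∧ t = Tm.var x
  | .app f n ts =>
      (Tm.app f n ts ∈ T ∧ t = Tm.app f n ts) ∨
      (Tm.app f n ts ∉ T ∧ ∃ i, Tm.hasMaxOcc T t (ts i))

/-- `t` has a `T`-maximal occurrence in the formula. -/
def Fml.hasMaxOcc (T : Set Tm) (t : Tm) : Fml → Prop
  | .tru => False
  | .fls => False
  | .atom _ _ ts => ∃ i, Tm.hasMaxOcc T t (ts i)
  | .neg F => F.hasMaxOcc T t
  | .conj F G => F.hasMaxOcc T t ∨ G.hasMaxOcc T t
  | .disj F G => F.hasMaxOcc T t ∨ G.hasMaxOcc T t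
  | .all _ F => F.hasMaxOcc T t
  | .exi _ F => F.hasMaxOcc T t

/-- Universal quantification over a list of variables. -/
def alls (xs : List ℕ) (F : Fml) : Fml := xs.foldr Fml.all F

end CTIF
namespace CTIF

/-- `M'` agrees with `M` except possibly in the interpretation of the function
symbols (with arity) in `S`. -/
def agreeExcept {D : Type} (M M' : Struc D) (S : Set (ℕ × ℕ)) : Prop :=
  M'.pr = M.pr ∧ ∀ g n, (g, n) ∉ S → M'.fn g n = M.fn g n

/-- Interpolant lifting base ⟨F, G, 𝔽, 𝔾, H_grd, F_exp, G_exp, θ⟩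
(Definition of "interpolant lifting base"). -/
def IsLiftBase (F G : Fml) (FS GS : Set (ℕ × ℕ)) (Hg Fe Ge : Fml) (θ : Subst) : Prop :=
  F.isSentence ∧ G.isSentence ∧
  FS ∩ GS = ∅ ∧
  Hg.isGround ∧ Fe.isQF ∧ Ge.isQF ∧ Subst.isGround θ ∧
  -- (i)  F ⊨ ∃𝔽 ∀u F_exp, semantically via expansions:
  (∀ (D : Type), Nonempty D → ∀ M : Struc D, (∀ a, F.sat M a) →
    ∃ M' : Struc D, agreeExcept M M' FS ∧ ∀ a, Fe.sat M' a) ∧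
  -- (i') ∀𝔾 ∃v G_exp ⊨ G, semantically via reinterpretations:
  (∀ (D : Type), Nonempty D → ∀ M : Struc D,
    (∀ M' : Struc D, agreeExcept M M' GS → ∃ a, Ge.sat M' a) → ∀ a, G.sat M a) ∧
  -- (ii), (ii')
  Fe.pred ⊆ F.pred ∧ Ge.pred ⊆ G.pred ∧
  -- (iii), (iii')
  Fe.funs ⊆ (F.funs ∩ G.funs) ∪ FS ∧ Ge.funs ⊆ (F.funs ∩ G.funs) ∪ GS ∧
  -- (iv), (iv')
  F.funs ∩ GS = ∅ ∧ G.funs ∩ FS = ∅ ∧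
  -- (v)
  Subst.dom θ = Fe.free ∪ Ge.free ∧
  -- (vi)
  (∃ c₀ : ℕ, (c₀, 0) ∈ FS ∪ GS ∧
    ∀ x ∈ Subst.dom θ, (θ x).funs ⊆ Fe.funs ∪ Ge.funs ∪ {(c₀, 0)}) ∧
  -- (vii)
  CLInterp (Fe.subst θ) (Ge.subst θ) Hg

/-- The lifted formula Q₁v₁ … Qₙvₙ body, where Qᵢ = ∃ if tᵢ is an 𝔽-term
(its outermost symbol is in `FS`) and Qᵢ = ∀ otherwise. -/
noncomputable def lifted (n : ℕ) (v : Fin n → ℕ) (tl : Fin n → Tm)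
    (FS : Set (ℕ × ℕ)) (body : Fml) : Fml :=
  (List.finRange n).foldr
    (fun i acc => if isSTerm FS (tl i) then Fml.exi (v i) acc else Fml.all (v i) acc)
    body

end CTIF
namespace CTIF

/-!
Put `F` and `¬G` in negation normal form and Skolemize them, with disjoint sets of fresh
Skolem symbols. As `F ⊨ G`, the universal closures of the two quantifier-free Skolem forms have
no common model, so by Herbrand's theorem (propositional compactness applied to Herbrand
structures) some finitely many ground instances `σ₁, …, σₙ` of their conjunction are
propositionally unsatisfiable. Take for `F_exp` the conjunction of `n` variable-disjoint copies of
the Skolem form of `F`, for `G_exp` the negated conjunction of the corresponding copies of the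
Skolem form of `¬G`, and for `θ` the substitution acting on the `i`-th copy as `σᵢ`. Then
`F_exp θ` propositionally entails `G_exp θ`, and their propositional Lyndon interpolant is the
ground interpolant `H_grd`. Skolem functions exist in every model, which gives (i) and (i') with
`𝔽` and `𝔾` the Skolem symbols of `F` and of `¬G`, together with the symbols occurring only in `F`,
respectively only in `G`.
-/

namespace Tm

theorem eval_subst {D : Type} (M : Struc D) (a : ℕ → D) (σ : Subst) (t : Tm) :
    (t.subst σ).eval M a = t.eval M (fun x => (σ x).eval M a) := by
  induction t with
  | var x => rfl
  | app f n ts ih => simp only [subst, eval, ih]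

theorem eval_congr {D : Type} {M M' : Struc D} {a a' : ℕ → D} (t : Tm)
    (hfn : ∀ q ∈ t.funs, M.fn q.1 q.2 = M'.fn q.1 q.2) (hv : ∀ x ∈ t.vars, a x = a' x) :
    t.eval M a = t.eval M' a' := by
  induction t with
  | var x => exact hv x rfl
  | app f n ts ih =>
    simp only [funs, vars, Set.mem_insert_iff, Set.mem_iUnion] at hfn hv
    simp only [eval, hfn (f, n) (.inl rfl)]
    congr 1
    funext i
    exact ih i (fun q hq => hfn q (.inr ⟨i, hq⟩)) (fun x hx => hv x ⟨i, hx⟩)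

theorem subst_subst (ρ θ : Subst) (t : Tm) :
    (t.subst ρ).subst θ = t.subst (fun x => (ρ x).subst θ) := by
  induction t with
  | var x => rfl
  | app f n ts ih => simp only [subst, ih]

theorem subst_congr {σ σ' : Subst} (t : Tm) (h : ∀ x ∈ t.vars, σ x = σ' x) :
    t.subst σ = t.subst σ' := by
  induction t with
  | var x => exact h x rfl
  | app f n ts ih =>
    simp only [vars, Set.mem_iUnion] at h
    simp only [subst, app.injEq, heq_eq_eq, true_and]
    funext i
    exact ih i (fun x hx => h x ⟨i, hx⟩)

theorem vars_subst (σ : Subst) (t : Tm) : (t.subst σ).vars = ⋃ y ∈ t.vars, (σ y).vars := by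
  induction t with
  | var y => simp [subst, vars]
  | app f n ts ih => simp only [subst, vars, ih, Set.biUnion_iUnion]

theorem funs_subst (σ : Subst) (t : Tm) :
    (t.subst σ).funs = t.funs ∪ ⋃ y ∈ t.vars, (σ y).funs := by
  induction t with
  | var y => simp [subst, funs, vars]
  | app f n ts ih =>
    simp only [subst, funs, vars, ih, Set.biUnion_iUnion, Set.insert_union,
      Set.iUnion_union_distrib]

theorem funs_finite (t : Tm) : t.funs.Finite := by
  induction t with
  | var x => simp [funs]
  | app f n ts ih => exact (Set.finite_iUnion ih).insert _

theorem builtFrom.vars_eq_empty {S : Set (ℕ × ℕ)} {t : Tm} (h : t.builtFrom S) : t.vars = ∅ := by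
  induction t with
  | var x => exact h.elim
  | app f n ts ih => simpa [vars] using fun i => ih i (h.2 i)

theorem builtFrom.funs_subset {S : Set (ℕ × ℕ)} {t : Tm} (h : t.builtFrom S) : t.funs ⊆ S := by
  induction t with
  | var x => exact h.elim
  | app f n ts ih => simpa [funs, Set.insert_subset_iff] using ⟨h.1, fun i => ih i (h.2 i)⟩

end Tm

namespace Fml

theorem sat_subst {D : Type} (M : Struc D) (σ : Subst) {φ : Fml} (hq : φ.isQF) (a : ℕ → D) :
    (φ.subst σ).sat M a ↔ φ.sat M (fun x => (σ x).eval M a) := by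
  induction φ with
  | tru | fls => exact Iff.rfl
  | atom p n ts => simp only [subst, sat, Tm.eval_subst]
  | neg φ ih => exact not_congr (ih hq)
  | conj φ ψ ih₁ ih₂ => exact and_congr (ih₁ hq.1) (ih₂ hq.2)
  | disj φ ψ ih₁ ih₂ => exact or_congr (ih₁ hq.1) (ih₂ hq.2)
  | all | exi => exact hq.elim

theorem sat_congr {D : Type} {M M' : Struc D} (φ : Fml) {a a' : ℕ → D} (hpr : M.pr = M'.pr)
    (hfn : ∀ q ∈ φ.funs, M.fn q.1 q.2 = M'.fn q.1 q.2) (hv : ∀ x ∈ φ.free, a x = a' x) :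
    φ.sat M a ↔ φ.sat M' a' := by
  induction φ generalizing a a' with
  | tru | fls => exact Iff.rfl
  | atom p n ts =>
    simp only [funs, free, Set.mem_iUnion] at hfn hv
    simp only [sat, hpr]
    exact iff_of_eq (congrArg _ (funext fun i => Tm.eval_congr (ts i)
      (fun q hq => hfn q ⟨i, hq⟩) (fun x hx => hv x ⟨i, hx⟩)))
  | neg φ ih => exact not_congr (ih hfn hv)
  | conj φ ψ ih₁ ih₂ | disj φ ψ ih₁ ih₂ =>
    simp only [funs, free, Set.mem_union] at hfn hv
    have h₁ := ih₁ (fun q hq => hfn q (.inl hq)) (fun x hx => hv x (.inl hx))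
    have h₂ := ih₂ (fun q hq => hfn q (.inr hq)) (fun x hx => hv x (.inr hx))
    first | exact and_congr h₁ h₂ | exact or_congr h₁ h₂
  | all x φ ih | exi x φ ih =>
    have h : ∀ d, φ.sat M (Function.update a x d) ↔ φ.sat M' (Function.update a' x d) := by
      refine fun d => ih hfn fun y hy => ?_
      by_cases hyx : y = x
      · simp [hyx]
      · simpa [hyx] using hv y ⟨hy, hyx⟩
    first | exact forall_congr' h | exact exists_congr h

theorem subst_subst (ρ θ : Subst) {φ : Fml} (hq : φ.isQF) :
    (φ.subst ρ).subst θ = φ.subst (fun x => (ρ x).subst θ) := by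
  induction φ with
  | tru | fls => rfl
  | atom p n ts => simp only [subst, Tm.subst_subst]
  | neg φ ih => simp only [subst, ih hq]
  | conj φ ψ ih₁ ih₂ | disj φ ψ ih₁ ih₂ => simp only [subst, ih₁ hq.1, ih₂ hq.2]
  | all | exi => exact hq.elim

theorem subst_congr {σ σ' : Subst} {φ : Fml} (hq : φ.isQF) (h : ∀ x ∈ φ.free, σ x = σ' x) :
    φ.subst σ = φ.subst σ' := by
  induction φ with
  | tru | fls => rfl
  | atom p n ts =>
    simp only [free, Set.mem_iUnion] at h
    simp only [subst, atom.injEq, heq_eq_eq, true_and]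
    exact funext fun i => Tm.subst_congr (ts i) fun x hx => h x ⟨i, hx⟩
  | neg φ ih => simp only [subst, ih hq h]
  | conj φ ψ ih₁ ih₂ | disj φ ψ ih₁ ih₂ =>
    simp only [free, Set.mem_union] at h
    simp only [subst, ih₁ hq.1 fun x hx => h x (.inl hx), ih₂ hq.2 fun x hx => h x (.inr hx)]
  | all | exi => exact hq.elim

theorem free_subst (σ : Subst) {φ : Fml} (hq : φ.isQF) :
    (φ.subst σ).free = ⋃ y ∈ φ.free, (σ y).vars := by
  induction φ with
  | tru | fls => simp [subst, free]
  | atom p n ts => simp only [subst, free, Tm.vars_subst, Set.biUnion_iUnion]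
  | neg φ ih => exact ih hq
  | conj φ ψ ih₁ ih₂ | disj φ ψ ih₁ ih₂ =>
    simp only [subst, free, ih₁ hq.1, ih₂ hq.2, Set.biUnion_union]
  | all | exi => exact hq.elim

theorem funs_subst (σ : Subst) {φ : Fml} (hq : φ.isQF) :
    (φ.subst σ).funs = φ.funs ∪ ⋃ y ∈ φ.free, (σ y).funs := by
  induction φ with
  | tru | fls => simp [subst, funs, free]
  | atom p n ts =>
    simp only [subst, funs, free, Tm.funs_subst, Set.biUnion_iUnion, Set.iUnion_union_distrib]
  | neg φ ih => exact ih hq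
  | conj φ ψ ih₁ ih₂ | disj φ ψ ih₁ ih₂ =>
    simp only [subst, funs, free, ih₁ hq.1, ih₂ hq.2, Set.biUnion_union]
    exact Set.union_union_union_comm _ _ _ _
  | all | exi => exact hq.elim

theorem preds_subst (σ : Subst) (φ : Fml) (b : Bool) : (φ.subst σ).preds b = φ.preds b := by
  induction φ generalizing σ b with
  | tru | fls | atom => rfl
  | neg φ ih => exact ih σ !b
  | conj φ ψ ih₁ ih₂ | disj φ ψ ih₁ ih₂ => simp only [subst, preds, ih₁, ih₂]
  | all x φ ih | exi x φ ih => exact ih _ b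

theorem isQF.subst (σ : Subst) {φ : Fml} (hq : φ.isQF) : (φ.subst σ).isQF := by
  induction φ with
  | tru | fls | atom => trivial
  | neg φ ih => exact ih hq
  | conj φ ψ ih₁ ih₂ | disj φ ψ ih₁ ih₂ => exact ⟨ih₁ hq.1, ih₂ hq.2⟩
  | all | exi => exact hq.elim

theorem funs_finite (φ : Fml) : φ.funs.Finite := by
  induction φ with
  | tru | fls => simp [funs]
  | atom p n ts => exact Set.finite_iUnion fun i => (ts i).funs_finite
  | neg φ ih | all x φ ih | exi x φ ih => exact ih
  | conj φ ψ ih₁ ih₂ | disj φ ψ ih₁ ih₂ => exact ih₁.union ih₂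

theorem exists_funs_lt (φ : Fml) : ∃ N, ∀ q ∈ φ.funs, q.1 < N := by
  obtain ⟨N, hN⟩ := (φ.funs_finite.image Prod.fst).bddAbove
  exact ⟨N + 1, fun q hq => Nat.lt_succ_of_le (hN (Set.mem_image_of_mem _ hq))⟩


theorem sat_of_isSentence {φ : Fml} (hφ : φ.isSentence) {D : Type} {M : Struc D}
    {a : ℕ → D} (h : φ.sat M a) (a' : ℕ → D) : φ.sat M a' :=
  (sat_congr φ rfl (fun _ _ => rfl) fun x hx => ((hφ ▸ hx : x ∈ (∅ : Set ℕ))).elim).1 h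

end Fml


section AgreeExcept

variable {D : Type} {M M₁ M₂ : Struc D} {S T : Set (ℕ × ℕ)}

theorem agreeExcept_refl (M : Struc D) (S : Set (ℕ × ℕ)) : agreeExcept M M S :=
  ⟨rfl, fun _ _ _ => rfl⟩

theorem agreeExcept.mono (h : agreeExcept M M₁ S) (hST : S ⊆ T) : agreeExcept M M₁ T :=
  ⟨h.1, fun g n hg => h.2 g n fun hS => hg (hST hS)⟩

theorem agreeExcept.trans (h₁ : agreeExcept M M₁ S) (h₂ : agreeExcept M₁ M₂ T) :
    agreeExcept M M₂ (S ∪ T) :=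
  ⟨h₂.1.trans h₁.1, fun g n hg =>
    (h₂.2 g n fun hT => hg (.inr hT)).trans (h₁.2 g n fun hS => hg (.inl hS))⟩

theorem agreeExcept.trans_Ico {k l m : ℕ} (h₁ : agreeExcept M M₁ (Prod.fst ⁻¹' Set.Ico k l))
    (h₂ : agreeExcept M₁ M₂ (Prod.fst ⁻¹' Set.Ico l m)) (hkl : k ≤ l) (hlm : l ≤ m) :
    agreeExcept M M₂ (Prod.fst ⁻¹' Set.Ico k m) :=
  (h₁.trans h₂).mono <| by
    rw [← Set.preimage_union, Set.Ico_union_Ico_eq_Ico hkl hlm]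

theorem agreeExcept.eval_eq {k l : ℕ} (h : agreeExcept M M₁ (Prod.fst ⁻¹' Set.Ico k l)) {t : Tm}
    (ht : ∀ q ∈ t.funs, q.1 < k) (a : ℕ → D) : t.eval M₁ a = t.eval M a :=
  Tm.eval_congr t (fun q hq => h.2 q.1 q.2 fun hS => (ht q hq).not_ge hS.1)
    fun _ _ => rfl

theorem agreeExcept.sat_iff {k l : ℕ} (h : agreeExcept M M₁ (Prod.fst ⁻¹' Set.Ico k l)) {φ : Fml}
    (hφ : ∀ q ∈ φ.funs, q.1 < k) {a a' : ℕ → D} (ha : ∀ x ∈ φ.free, a x = a' x) :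
    φ.sat M₁ a ↔ φ.sat M a' :=
  Fml.sat_congr φ h.1 (fun q hq => h.2 q.1 q.2 fun hS => (hφ q hq).not_ge hS.1) ha

theorem agreeExcept.sat_comp_iff {k l : ℕ} (h : agreeExcept M M₁ (Prod.fst ⁻¹' Set.Ico k l))
    {φ : Fml} (hφ : ∀ q ∈ φ.funs, q.1 < k) {ρ : Subst}
    (hρ : ∀ y ∈ φ.free, ∀ q ∈ (ρ y).funs, q.1 < k) (a : ℕ → D) :
    φ.sat M₁ (fun x => (ρ x).eval M₁ a) ↔ φ.sat M fun x => (ρ x).eval M a :=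
  h.sat_iff hφ fun y hy => h.eval_eq (hρ y hy) a

end AgreeExcept

/-- Atomic formulas `p(t₁, …, tₙ)` as data. -/
abbrev Atom : Type := (_ : ℕ) × (n : ℕ) × (Fin n → Tm)

abbrev Val : Type := Atom → Prop

namespace Fml

/-- Evaluation with the atoms as propositional variables. Quantified subformulas get the junk
value `True`; only quantifier-free formulas are evaluated. -/
def peval (v : Val) : Fml → Prop
  | .tru => True
  | .fls => False
  | .atom p n ts => v ⟨p, n, ts⟩
  | .neg φ => ¬ φ.peval v
  | .conj φ ψ => φ.peval v ∧ ψ.peval v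
  | .disj φ ψ => φ.peval v ∨ ψ.peval v
  | .all _ _ => True
  | .exi _ _ => True

def atomVal {D : Type} (M : Struc D) (a : ℕ → D) : Val :=
  fun α => M.pr α.1 α.2.1 fun i => (α.2.2 i).eval M a

theorem sat_iff_peval {D : Type} (M : Struc D) (a : ℕ → D) {φ : Fml} (hq : φ.isQF) :
    φ.sat M a ↔ φ.peval (atomVal M a) := by
  induction φ with
  | tru | fls | atom => exact Iff.rfl
  | neg φ ih => exact not_congr (ih hq)
  | conj φ ψ ih₁ ih₂ => exact and_congr (ih₁ hq.1) (ih₂ hq.2)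
  | disj φ ψ ih₁ ih₂ => exact or_congr (ih₁ hq.1) (ih₂ hq.2)
  | all | exi => exact hq.elim

theorem entails_of_peval {φ ψ : Fml} (hφ : φ.isQF) (hψ : ψ.isQF)
    (h : ∀ v, φ.peval v → ψ.peval v) : entails φ ψ := fun _ _ M a hs =>
  (sat_iff_peval M a hψ).2 (h _ ((sat_iff_peval M a hφ).1 hs))

def atoms : Fml → List Atom
  | .tru | .fls => []
  | .atom p n ts => [⟨p, n, ts⟩]
  | .neg φ | .all _ φ | .exi _ φ => φ.atoms
  | .conj φ ψ | .disj φ ψ => φ.atoms ++ ψ.atoms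

/-- The atom occurrences of a formula, with their polarities in a context of polarity `b`. -/
def occs : Fml → Bool → Set (Atom × Bool)
  | .tru, _ | .fls, _ => ∅
  | .atom p n ts, b => {(⟨p, n, ts⟩, b)}
  | .neg φ, b => φ.occs !b
  | .conj φ ψ, b | .disj φ ψ, b => φ.occs b ∪ ψ.occs b
  | .all _ φ, b | .exi _ φ, b => φ.occs b

theorem mem_atoms_of_mem_occs {φ : Fml} {b c : Bool} {α : Atom} (h : (α, c) ∈ φ.occs b) :
    α ∈ φ.atoms := by
  induction φ generalizing b with
  | tru | fls => exact h.elim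
  | atom => exact List.mem_singleton.2 (Prod.ext_iff.1 h).1
  | neg φ ih | all x φ ih | exi x φ ih => exact ih h
  | conj φ ψ ih₁ ih₂ | disj φ ψ ih₁ ih₂ =>
    exact h.elim (fun h => List.mem_append_left _ (ih₁ h)) fun h => List.mem_append_right _ (ih₂ h)

theorem mem_preds_of_mem_occs {φ : Fml} {b c : Bool} {α : Atom} (h : (α, c) ∈ φ.occs b) :
    (α.1, c) ∈ φ.preds b := by
  induction φ generalizing b with
  | tru | fls => exact h.elim
  | atom => cases h; rfl
  | neg φ ih | all x φ ih | exi x φ ih => exact ih h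
  | conj φ ψ ih₁ ih₂ | disj φ ψ ih₁ ih₂ => exact h.imp ih₁ ih₂

theorem funs_subset_of_mem_atoms {φ : Fml} {α : Atom} (h : α ∈ φ.atoms) (i : Fin α.2.1) :
    (α.2.2 i).funs ⊆ φ.funs := by
  induction φ with
  | tru | fls => exact (List.not_mem_nil h).elim
  | atom => cases List.mem_singleton.1 h; exact Set.subset_iUnion_of_subset i subset_rfl
  | neg φ ih | all x φ ih | exi x φ ih => exact ih h
  | conj φ ψ ih₁ ih₂ | disj φ ψ ih₁ ih₂ =>
    exact (List.mem_append.1 h).elim (fun h => (ih₁ h).trans Set.subset_union_left)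
      fun h => (ih₂ h).trans Set.subset_union_right

theorem vars_subset_of_mem_atoms {φ : Fml} (hq : φ.isQF) {α : Atom} (h : α ∈ φ.atoms)
    (i : Fin α.2.1) : (α.2.2 i).vars ⊆ φ.free := by
  induction φ with
  | tru | fls => exact (List.not_mem_nil h).elim
  | atom => cases List.mem_singleton.1 h; exact Set.subset_iUnion_of_subset i subset_rfl
  | neg φ ih => exact ih hq h
  | conj φ ψ ih₁ ih₂ | disj φ ψ ih₁ ih₂ =>
    exact (List.mem_append.1 h).elim (fun h => (ih₁ hq.1 h).trans Set.subset_union_left)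
      fun h => (ih₂ hq.2 h).trans Set.subset_union_right
  | all | exi => exact hq.elim

theorem peval_congr {v v' : Val} {φ : Fml} (h : ∀ α ∈ φ.atoms, v α ↔ v' α) :
    φ.peval v ↔ φ.peval v' := by
  induction φ with
  | tru | fls | all | exi => exact Iff.rfl
  | atom p n ts => exact h _ (List.mem_singleton_self _)
  | neg φ ih => exact not_congr (ih h)
  | conj φ ψ ih₁ ih₂ | disj φ ψ ih₁ ih₂ =>
    have h₁ := ih₁ fun α hα => h α (List.mem_append_left _ hα)
    have h₂ := ih₂ fun α hα => h α (List.mem_append_right _ hα)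
    first | exact and_congr h₁ h₂ | exact or_congr h₁ h₂

/-- Passing from `v` to `w`, truth is preserved (reflected if `b = false`) when no atom that
becomes true occurs negatively and no atom that becomes false occurs positively. -/
theorem peval_mono_of_occs {v w : Val} {φ : Fml} {b : Bool}
    (hup : ∀ α, ¬ v α → w α → (α, false) ∉ φ.occs b)
    (hdown : ∀ α, v α → ¬ w α → (α, true) ∉ φ.occs b) :
    cond b (φ.peval v → φ.peval w) (φ.peval w → φ.peval v) := by
  induction φ generalizing b with
  | tru | fls | all | exi => cases b <;> exact id
  | atom p n ts =>
    cases b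
    · exact fun hw => by_contra fun hv => hup _ hv hw rfl
    · exact fun hv => by_contra fun hw => hdown _ hv hw rfl
  | neg φ ih => cases b <;> exact mt (ih hup hdown)
  | conj φ ψ ih₁ ih₂ | disj φ ψ ih₁ ih₂ =>
    have h₁ := ih₁ (b := b) (fun α h h' h'' => hup α h h' (.inl h''))
      fun α h h' h'' => hdown α h h' (.inl h'')
    have h₂ := ih₂ (b := b) (fun α h h' h'' => hup α h h' (.inr h''))
      fun α h h' h'' => hdown α h h' (.inr h'')
    cases b <;> first | exact And.imp h₁ h₂ | exact Or.imp h₁ h₂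

theorem peval_mono {v w : Val} {φ : Fml} (hup : ∀ α, ¬ v α → w α → (α, false) ∉ φ.occs true)
    (hdown : ∀ α, v α → ¬ w α → (α, true) ∉ φ.occs true) : φ.peval v → φ.peval w :=
  peval_mono_of_occs (b := true) hup hdown

end Fml

def conjList (L : List Fml) : Fml := L.foldr .conj .tru

def disjList (L : List Fml) : Fml := L.foldr .disj .fls

section BigConnectives

variable {L : List Fml}

theorem peval_conjList (v : Val) : (conjList L).peval v ↔ ∀ φ ∈ L, φ.peval v := by
  induction L with
  | nil => simp [conjList, Fml.peval]
  | cons φ L ih => simp [conjList, Fml.peval, ← ih]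

theorem peval_disjList (v : Val) : (disjList L).peval v ↔ ∃ φ ∈ L, φ.peval v := by
  induction L with
  | nil => simp [disjList, Fml.peval]
  | cons φ L ih => simp [disjList, Fml.peval, ← ih]

theorem sat_conjList {D : Type} (M : Struc D) (a : ℕ → D) :
    (conjList L).sat M a ↔ ∀ φ ∈ L, φ.sat M a := by
  induction L with
  | nil => simp [conjList, Fml.sat]
  | cons φ L ih => simp [conjList, Fml.sat, ← ih]

theorem isQF_conjList (h : ∀ φ ∈ L, φ.isQF) : (conjList L).isQF := by
  induction L with
  | nil => trivial
  | cons φ L ih => exact ⟨h φ List.mem_cons_self, ih fun ψ hψ => h ψ (List.mem_cons_of_mem _ hψ)⟩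

theorem isQF_disjList (h : ∀ φ ∈ L, φ.isQF) : (disjList L).isQF := by
  induction L with
  | nil => trivial
  | cons φ L ih => exact ⟨h φ List.mem_cons_self, ih fun ψ hψ => h ψ (List.mem_cons_of_mem _ hψ)⟩

theorem preds_conjList (b : Bool) : (conjList L).preds b = ⋃ φ ∈ L, φ.preds b := by
  induction L with
  | nil => simp [conjList, Fml.preds]
  | cons φ L ih => simp [conjList, Fml.preds, ← ih]

theorem preds_disjList (b : Bool) : (disjList L).preds b = ⋃ φ ∈ L, φ.preds b := by
  induction L with
  | nil => simp [disjList, Fml.preds]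
  | cons φ L ih => simp [disjList, Fml.preds, ← ih]

theorem funs_conjList : (conjList L).funs = ⋃ φ ∈ L, φ.funs := by
  induction L with
  | nil => simp [conjList, Fml.funs]
  | cons φ L ih => simp [conjList, Fml.funs, ← ih]

theorem funs_disjList : (disjList L).funs = ⋃ φ ∈ L, φ.funs := by
  induction L with
  | nil => simp [disjList, Fml.funs]
  | cons φ L ih => simp [disjList, Fml.funs, ← ih]

theorem free_conjList : (conjList L).free = ⋃ φ ∈ L, φ.free := by
  induction L with
  | nil => simp [conjList, Fml.free]
  | cons φ L ih => simp [conjList, Fml.free, ← ih]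

theorem free_disjList : (disjList L).free = ⋃ φ ∈ L, φ.free := by
  induction L with
  | nil => simp [disjList, Fml.free]
  | cons φ L ih => simp [disjList, Fml.free, ← ih]

theorem subst_conjList (σ : Subst) : (conjList L).subst σ = conjList (L.map (Fml.subst σ)) := by
  induction L with
  | nil => rfl
  | cons φ L ih => simp only [conjList, List.foldr_cons, Fml.subst, List.map_cons] at ih ⊢; rw [ih]

end BigConnectives

section GroundInterpolation

variable (A B : Fml)

/-- The atom `α` may occur with polarity `c` in an interpolant of `A` and `B`. -/
def Allowed (α : Atom) (c : Bool) : Prop :=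
  (α.1, c) ∈ A.pred ∧ (α.1, c) ∈ B.pred ∧ ∀ i, (α.2.2 i).funs ⊆ B.funs

/-- The literal of `α` that holds when exactly the atoms in `T` are true, or `⊤` if that
literal is not allowed. -/
noncomputable def interpLit (T : List Atom) (α : Atom) : Fml :=
  if α ∈ T then if Allowed A B α true then .atom α.1 α.2.1 α.2.2 else .tru
  else if Allowed A B α false then .neg (.atom α.1 α.2.1 α.2.2) else .tru

/-- The disjunction, over the sets `T` of atoms of `A` whose truth makes `A` true, of the
allowed literals describing `T`. -/
noncomputable def interpolant : Fml :=
  disjList ((A.atoms.sublists.filter fun T => A.peval (· ∈ T)).map fun T =>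
    conjList (A.atoms.map (interpLit A B T)))

variable {A B}

theorem peval_interpolant {v : Val} (h : A.peval v) : (interpolant A B).peval v := by
  set T := A.atoms.filter fun α => v α
  have hT : A.peval (· ∈ T) := (Fml.peval_congr fun α hα => by simp [T, hα]).2 h
  refine (peval_disjList v).2 ⟨_, List.mem_map_of_mem (List.mem_filter.2
    ⟨List.mem_sublists.2 List.filter_sublist, decide_eq_true hT⟩), (peval_conjList v).2 ?_⟩
  simp only [List.mem_map]
  rintro _ ⟨α, hα, rfl⟩
  by_cases hαT : α ∈ T
  · rw [interpLit, if_pos hαT]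
    split_ifs
    exacts [of_decide_eq_true (List.mem_filter.1 hαT).2, trivial]
  · rw [interpLit, if_neg hαT]
    split_ifs
    exacts [fun hv => hαT (List.mem_filter.2 ⟨hα, decide_eq_true hv⟩), trivial]

theorem peval_of_peval_interpolant (hAB : ∀ v, A.peval v → B.peval v) {v : Val}
    (h : (interpolant A B).peval v) : B.peval v := by
  obtain ⟨_, hmem, hlits⟩ := (peval_disjList v).1 h
  obtain ⟨T, hT, rfl⟩ := List.mem_map.1 hmem
  have hTA : A.peval (· ∈ T) := by simpa using (List.mem_filter.1 hT).2
  have hlit : ∀ α ∈ A.atoms, (interpLit A B T α).peval v := fun α hα =>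
    (peval_conjList v).1 hlits _ (List.mem_map_of_mem hα)
  -- `u` follows `T` on the atoms occurring in `A` with the polarity of their truth value under
  -- `T`, and `v` elsewhere: `A` stays true from `T` to `u`, and `B` from `u` to `v`, because
  -- where `u` and `v` differ on an atom of `B` the literals of `T` pin down `v`
  let u : Val := fun α => if α ∈ A.atoms ∧ (α.1, decide (α ∈ T)) ∈ A.pred then α ∈ T else v α
  have hu : A.peval u := by
    refine Fml.peval_mono (fun α hT hu hocc => ?_) (fun α hT hu hocc => ?_) hTA <;>
    · have hα := Fml.mem_atoms_of_mem_occs hocc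
      have hp := Fml.mem_preds_of_mem_occs hocc
      simp_all [u, Fml.pred]
  refine Fml.peval_mono (fun α hu hv hocc => ?_) (fun α hu hv hocc => ?_) (hAB u hu)
  all_goals
    have hfuns := Fml.funs_subset_of_mem_atoms (Fml.mem_atoms_of_mem_occs hocc)
    have hp := Fml.mem_preds_of_mem_occs hocc
    by_cases hαA : α ∈ A.atoms
    · have := hlit α hαA
      by_cases hαT : α ∈ T <;> simp_all [u, interpLit, Allowed, Fml.peval, Fml.pred]
    · simp_all [u]


theorem isQF_interpLit (T : List Atom) (α : Atom) : (interpLit A B T α).isQF := by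
  unfold interpLit; split_ifs <;> trivial

theorem isQF_interpolant : (interpolant A B).isQF := by
  refine isQF_disjList fun φ hφ => ?_
  obtain ⟨T, -, rfl⟩ := List.mem_map.1 hφ
  refine isQF_conjList fun ψ hψ => ?_
  obtain ⟨α, -, rfl⟩ := List.mem_map.1 hψ
  exact isQF_interpLit T α

theorem pred_interpLit_subset (T : List Atom) (α : Atom) :
    (interpLit A B T α).pred ⊆ A.pred ∩ B.pred := by
  unfold interpLit
  split_ifs with _ h h <;>
    simp only [Fml.pred, Fml.preds, Bool.not_true, Set.singleton_subset_iff, Set.empty_subset]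
  exacts [⟨h.1, h.2.1⟩, ⟨h.1, h.2.1⟩]

theorem funs_interpLit_subset (T : List Atom) {α : Atom} (hα : α ∈ A.atoms) :
    (interpLit A B T α).funs ⊆ A.funs ∩ B.funs := by
  unfold interpLit
  split_ifs with _ h h <;> simp only [Fml.funs, Set.empty_subset, Set.iUnion_subset_iff] <;>
    exact fun i => Set.subset_inter (Fml.funs_subset_of_mem_atoms hα i) (h.2.2 i)

theorem free_interpLit_subset (hA : A.isQF) (T : List Atom) {α : Atom} (hα : α ∈ A.atoms) :
    (interpLit A B T α).free ⊆ A.free := by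
  unfold interpLit
  split_ifs <;> simp only [Fml.free, Set.empty_subset, Set.iUnion_subset_iff] <;>
    exact Fml.vars_subset_of_mem_atoms hA hα

theorem pred_interpolant_subset : (interpolant A B).pred ⊆ A.pred ∩ B.pred := by
  intro q hq
  simp only [interpolant, Fml.pred, preds_disjList, List.mem_map,
    Set.mem_iUnion] at hq
  obtain ⟨_, ⟨T, -, rfl⟩, hq⟩ := hq
  simp only [preds_conjList, List.mem_map, Set.mem_iUnion] at hq
  obtain ⟨_, ⟨α, -, rfl⟩, hq⟩ := hq
  exact pred_interpLit_subset T α hq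

theorem funs_interpolant_subset : (interpolant A B).funs ⊆ A.funs ∩ B.funs := by
  intro q hq
  simp only [interpolant, funs_disjList, List.mem_map, Set.mem_iUnion] at hq
  obtain ⟨_, ⟨T, -, rfl⟩, hq⟩ := hq
  simp only [funs_conjList, List.mem_map, Set.mem_iUnion] at hq
  obtain ⟨_, ⟨α, hα, rfl⟩, hq⟩ := hq
  exact funs_interpLit_subset T hα hq

theorem free_interpolant_subset (hA : A.isQF) : (interpolant A B).free ⊆ A.free := by
  intro x hx
  simp only [interpolant, free_disjList, List.mem_map, Set.mem_iUnion] at hx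
  obtain ⟨_, ⟨T, -, rfl⟩, hx⟩ := hx
  simp only [free_conjList, List.mem_map, Set.mem_iUnion] at hx
  obtain ⟨_, ⟨α, hα, rfl⟩, hx⟩ := hx
  exact free_interpLit_subset hA T hα hx

theorem exists_ground_CLInterp (hA : A.isGround) (hB : B.isQF)
    (hAB : ∀ v, A.peval v → B.peval v) : ∃ H, H.isGround ∧ CLInterp A B H := by
  have hfree : (interpolant A B).free = ∅ :=
    Set.subset_empty_iff.1 (hA.2 ▸ free_interpolant_subset hA.1)
  refine ⟨interpolant A B, ⟨isQF_interpolant, hfree⟩,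
    Fml.entails_of_peval hA.1 isQF_interpolant fun v => peval_interpolant,
    Fml.entails_of_peval isQF_interpolant hB fun v => peval_of_peval_interpolant hAB,
    pred_interpolant_subset, funs_interpolant_subset, by simp [hfree]⟩

end GroundInterpolation

theorem Fml.isClopen_setOf_peval (φ : Fml) :
    IsClopen {w : Atom → Bool | φ.peval (w · = true)} := by
  induction φ with
  | tru | all | exi => exact isClopen_univ
  | fls => exact isClopen_empty
  | atom p n ts => exact (isClopen_discrete {true}).preimage (continuous_apply _)
  | neg φ ih => exact ih.compl
  | conj φ ψ ih₁ ih₂ => exact ih₁.inter ih₂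
  | disj φ ψ ih₁ ih₂ => exact ih₁.union ih₂

/-- Propositional compactness, from the compactness of the Cantor space `Atom → Bool`. -/
theorem Fml.exists_forall_peval {ι : Type} (φ : ι → Fml)
    (h : ∀ s : Finset ι, ∃ v, ∀ i ∈ s, (φ i).peval v) : ∃ v, ∀ i, (φ i).peval v := by
  obtain ⟨w, -, hw⟩ := isCompact_univ.inter_iInter_nonempty _
    (fun i => (φ i).isClopen_setOf_peval.isClosed) fun s => by
      obtain ⟨v, hv⟩ := h s
      exact ⟨fun α => decide (v α), trivial,
        Set.mem_iInter₂.2 fun i hi => by simpa using hv i hi⟩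
  exact ⟨(w · = true), Set.mem_iInter.1 hw⟩

def HerbrandUniverse (Sig : Set (ℕ × ℕ)) : Type := {t : Tm // t.builtFrom Sig}

noncomputable def herbrandStruc {Sig : Set (ℕ × ℕ)} (t₀ : HerbrandUniverse Sig) (v : Val) :
    Struc (HerbrandUniverse Sig) where
  fn f n ds :=
    if h : (f, n) ∈ Sig then ⟨.app f n fun i => (ds i).1, h, fun i => (ds i).2⟩ else t₀
  pr p n ds := v ⟨p, n, fun i => (ds i).1⟩

section Herbrand

variable {Sig : Set (ℕ × ℕ)}

theorem eval_herbrandStruc (t₀ : HerbrandUniverse Sig) (v : Val) {t : Tm} (ht : t.funs ⊆ Sig)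
    (a : ℕ → HerbrandUniverse Sig) :
    (t.eval (herbrandStruc t₀ v) a).1 = t.subst fun x => (a x).1 := by
  induction t with
  | var x => rfl
  | app f n ts ih =>
    simp only [Tm.funs, Set.insert_subset_iff, Set.iUnion_subset_iff] at ht
    have hfn : ∀ ds, ((herbrandStruc t₀ v).fn f n ds).1 = .app f n fun i => (ds i).1 :=
      fun ds => by simp [herbrandStruc, ht.1]
    simp only [Tm.eval, hfn, Tm.subst]
    exact congrArg _ (funext fun i => ih i (ht.2 i))

theorem sat_herbrandStruc (t₀ : HerbrandUniverse Sig) (v : Val) {φ : Fml} (hq : φ.isQF)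
    (hφ : φ.funs ⊆ Sig) (a : ℕ → HerbrandUniverse Sig) :
    φ.sat (herbrandStruc t₀ v) a ↔ (φ.subst fun x => (a x).1).peval v := by
  induction φ with
  | tru | fls => exact Iff.rfl
  | atom p n ts =>
    simp only [Fml.funs, Set.iUnion_subset_iff] at hφ
    change v ⟨p, n, fun i => ((ts i).eval (herbrandStruc t₀ v) a).1⟩ ↔ v ⟨p, n, fun i => _⟩
    simp only [eval_herbrandStruc t₀ v (hφ _)]
  | neg φ ih => exact not_congr (ih hq hφ)
  | conj φ ψ ih₁ ih₂ | disj φ ψ ih₁ ih₂ =>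
    have h₁ := ih₁ hq.1 (Set.union_subset_iff.1 hφ).1
    have h₂ := ih₂ hq.2 (Set.union_subset_iff.1 hφ).2
    first | exact and_congr h₁ h₂ | exact or_congr h₁ h₂
  | all | exi => exact hq.elim

/-- Herbrand's theorem. -/
theorem exists_unsat_instances (t₀ : HerbrandUniverse Sig) {ψ : Fml} (hq : ψ.isQF)
    (hψ : ψ.funs ⊆ Sig)
    (h : ∀ (D : Type) (M : Struc D), Nonempty D → ¬ ∀ a, ψ.sat M a) :
    ∃ (n : ℕ) (σ : ℕ → Subst), (∀ i x, (σ i x).builtFrom Sig) ∧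
      ∀ v, ∃ i < n, ¬ (ψ.subst (σ i)).peval v := by
  by_contra! hsat
  obtain ⟨v, hv⟩ := Fml.exists_forall_peval
    (fun σ : {σ : Subst // ∀ x, (σ x).builtFrom Sig} => ψ.subst σ.1) fun s => by
      let σ (i : ℕ) : Subst :=
        if h : i < s.card then (s.equivFin.symm ⟨i, h⟩).1 else fun _ => t₀.1
      obtain ⟨v, hv⟩ := hsat s.card σ fun i x => by
        unfold σ; split_ifs
        exacts [(s.equivFin.symm _).1.2 x, t₀.2]
      refine ⟨v, fun τ hτ => ?_⟩
      simpa [σ] using hv (s.equivFin ⟨τ, hτ⟩) (s.equivFin ⟨τ, hτ⟩).2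
  exact h _ (herbrandStruc t₀ v) ⟨t₀⟩ fun a =>
    (sat_herbrandStruc t₀ v hq hψ a).2 (hv ⟨fun x => (a x).1, fun x => (a x).2⟩)

end Herbrand

namespace Fml

/-- Negation normal form of `φ`, or of `¬φ` when `b = false`. -/
def nnf : Fml → Bool → Fml
  | .tru, b => cond b .tru .fls
  | .fls, b => cond b .fls .tru
  | .atom p n ts, b => cond b (.atom p n ts) (.neg (.atom p n ts))
  | .neg φ, b => φ.nnf !b
  | .conj φ ψ, b => cond b (.conj (φ.nnf b) (ψ.nnf b)) (.disj (φ.nnf b) (ψ.nnf b))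
  | .disj φ ψ, b => cond b (.disj (φ.nnf b) (ψ.nnf b)) (.conj (φ.nnf b) (ψ.nnf b))
  | .all x φ, b => cond b (.all x (φ.nnf b)) (.exi x (φ.nnf b))
  | .exi x φ, b => cond b (.exi x (φ.nnf b)) (.all x (φ.nnf b))

/-- Negation normal form, up to negated quantifier-free subformulas. -/
def IsNNF : Fml → Prop
  | .conj φ ψ | .disj φ ψ => φ.IsNNF ∧ ψ.IsNNF
  | .all _ φ | .exi _ φ => φ.IsNNF
  | φ => φ.isQF

theorem isNNF_nnf (φ : Fml) (b : Bool) : (φ.nnf b).IsNNF := by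
  induction φ generalizing b <;> cases b <;> simp_all [nnf, IsNNF, isQF]

theorem sat_nnf {D : Type} (M : Struc D) (φ : Fml) (b : Bool) (a : ℕ → D) :
    (φ.nnf b).sat M a ↔ cond b (φ.sat M a) (¬ φ.sat M a) := by
  induction φ generalizing b a <;> cases b <;> simp_all [nnf, sat, imp_iff_not_or]

theorem preds_nnf (φ : Fml) (b c : Bool) : (φ.nnf b).preds c = φ.preds (c == b) := by
  induction φ generalizing b c <;> cases b <;> cases c <;> simp_all [nnf, preds]

theorem funs_nnf (φ : Fml) (b : Bool) : (φ.nnf b).funs = φ.funs := by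
  induction φ generalizing b <;> cases b <;> simp_all [nnf, funs]

theorem free_nnf (φ : Fml) (b : Bool) : (φ.nnf b).free = φ.free := by
  induction φ generalizing b <;> cases b <;> simp_all [nnf, free]

end Fml

section Skolemization

def skTm (N : ℕ) (us : List ℕ) (c : ℕ) : Tm := .app (N + c) us.length fun i => .var us[i]

/-- Skolemization of a formula in negation normal form. The substitution `ρ` is applied to
the free variables, `us` lists the universal variables in scope, and the counter `c` (returned
updated) provides both the fresh variables `c` and the fresh Skolem symbols `N + c`. -/
def sk (N : ℕ) : Fml → Subst → List ℕ → ℕ → Fml × ℕ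
  | .conj φ ψ, ρ, us, c =>
    let r := sk N φ ρ us c
    let s := sk N ψ ρ us r.2
    (.conj r.1 s.1, s.2)
  | .disj φ ψ, ρ, us, c =>
    let r := sk N φ ρ us c
    let s := sk N ψ ρ us r.2
    (.disj r.1 s.1, s.2)
  | .all x φ, ρ, us, c => sk N φ (Function.update ρ x (.var c)) (us ++ [c]) (c + 1)
  | .exi x φ, ρ, us, c => sk N φ (Function.update ρ x (skTm N us c)) us (c + 1)
  | φ, ρ, _, c => (φ.subst ρ, c)

theorem forall_mem_update (P : Tm → Prop) {s : Set ℕ} {ρ : Subst} {x : ℕ} {t : Tm}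
    (hρ : ∀ y ∈ s \ {x}, P (ρ y)) (ht : P t) : ∀ y ∈ s, P (Function.update ρ x t y) := by
  intro y hy
  by_cases hyx : y = x
  · subst hyx; simpa using ht
  · simpa [hyx] using hρ y ⟨hy, hyx⟩

theorem exists_mem_update {P : Tm → Prop} {s : Set ℕ} {ρ : Subst} {x : ℕ} {t : Tm}
    (h : ∃ y ∈ s, P (Function.update ρ x t y)) : P t ∨ ∃ y ∈ s \ {x}, P (ρ y) := by
  obtain ⟨y, hy, h⟩ := h
  by_cases hyx : y = x
  · subst hyx; exact .inl (by simpa using h)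
  · exact .inr ⟨y, ⟨hy, hyx⟩, by simpa [hyx] using h⟩

theorem eval_comp_update {D : Type} (M : Struc D) (a : ℕ → D) (ρ : Subst) (x : ℕ) (t : Tm) :
    (fun y => (Function.update ρ x t y).eval M a) =
      Function.update (fun y => (ρ y).eval M a) x (t.eval M a) :=
  funext <| Function.apply_update (fun _ t => t.eval M a) ρ x t

variable {N : ℕ}

theorem sk_eq_of_isQF {φ : Fml} (hq : φ.isQF) (ρ : Subst) (us : List ℕ) (c : ℕ) :
    sk N φ ρ us c = (φ.subst ρ, c) := by
  induction φ generalizing c with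
  | tru | fls | atom | neg => rfl
  | conj φ ψ ih₁ ih₂ | disj φ ψ ih₁ ih₂ => simp only [sk, ih₁ hq.1, ih₂ hq.2, Fml.subst]
  | all | exi => exact hq.elim

theorem le_sk_snd (φ : Fml) (ρ : Subst) (us : List ℕ) (c : ℕ) : c ≤ (sk N φ ρ us c).2 := by
  induction φ generalizing ρ us c with
  | tru | fls | atom | neg => exact le_rfl
  | conj φ ψ ih₁ ih₂ | disj φ ψ ih₁ ih₂ => exact (ih₁ ρ us c).trans (ih₂ ρ us _)
  | all x φ ih | exi x φ ih => exact (Nat.le_succ c).trans (ih _ _ _)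

theorem isQF_sk {φ : Fml} (hφ : φ.IsNNF) (ρ : Subst) (us : List ℕ) (c : ℕ) :
    (sk N φ ρ us c).1.isQF := by
  induction φ generalizing ρ us c with
  | tru | fls | atom | neg => exact hφ.subst ρ
  | conj φ ψ ih₁ ih₂ | disj φ ψ ih₁ ih₂ => exact ⟨ih₁ hφ.1 ρ us c, ih₂ hφ.2 ρ us _⟩
  | all x φ ih | exi x φ ih => exact ih hφ _ _ _

theorem preds_sk_subset (φ : Fml) (ρ : Subst) (us : List ℕ) (c : ℕ) (b : Bool) :
    (sk N φ ρ us c).1.preds b ⊆ φ.preds b := by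
  induction φ generalizing ρ us c b with
  | tru | fls | atom | neg => exact (Fml.preds_subst ρ _ b).subset
  | conj φ ψ ih₁ ih₂ | disj φ ψ ih₁ ih₂ =>
    exact Set.union_subset_union (ih₁ ρ us c b) (ih₂ ρ us _ b)
  | all x φ ih | exi x φ ih => exact ih _ _ _ b

theorem mem_of_mem_vars_skTm {us : List ℕ} {c z : ℕ} (h : z ∈ (skTm N us c).vars) : z ∈ us := by
  simp only [skTm, Tm.vars, Set.mem_iUnion, Set.mem_singleton_iff] at h
  obtain ⟨i, rfl⟩ := h
  exact List.getElem_mem _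

theorem fst_eq_of_mem_funs_skTm {us : List ℕ} {c : ℕ} {q : ℕ × ℕ}
    (h : q ∈ (skTm N us c).funs) : q.1 = N + c := by
  simp only [skTm, Tm.funs, Set.mem_insert_iff, Set.mem_iUnion] at h
  rcases h with rfl | ⟨_, h⟩
  exacts [rfl, h.elim]

theorem mem_funs_sk {φ : Fml} (hφ : φ.IsNNF) (ρ : Subst) (us : List ℕ) (c : ℕ) {q : ℕ × ℕ}
    (hq : q ∈ (sk N φ ρ us c).1.funs) : q ∈ φ.funs ∨ (∃ y ∈ φ.free, q ∈ (ρ y).funs) ∨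
      q.1 ∈ Set.Ico (N + c) (N + (sk N φ ρ us c).2) := by
  induction φ generalizing ρ us c with
  | tru | fls | atom | neg =>
    rw [sk_eq_of_isQF hφ, Fml.funs_subst ρ hφ] at hq
    simp only [Set.mem_union, Set.mem_iUnion₂] at hq
    exact hq.imp_right fun ⟨y, hy, hq⟩ => .inl ⟨y, hy, hq⟩
  | conj φ ψ ih₁ ih₂ | disj φ ψ ih₁ ih₂ =>
    have h₁ := le_sk_snd (N := N) φ ρ us c
    have h₂ := le_sk_snd (N := N) ψ ρ us (sk N φ ρ us c).2
    rcases hq with hq | hq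
    · rcases ih₁ hφ.1 ρ us c hq with h | ⟨y, hy, h⟩ | h
      exacts [.inl (.inl h), .inr (.inl ⟨y, .inl hy, h⟩),
        .inr (.inr ⟨h.1, h.2.trans_le (Nat.add_le_add_left h₂ N)⟩)]
    · rcases ih₂ hφ.2 ρ us _ hq with h | ⟨y, hy, h⟩ | h
      exacts [.inl (.inr h), .inr (.inl ⟨y, .inr hy, h⟩),
        .inr (.inr ⟨by have := h.1; omega, h.2⟩)]
  | all x φ ih =>
    rcases ih hφ _ _ _ hq with h | h | h
    · exact .inl h
    · exact (exists_mem_update (P := (q ∈ ·.funs)) h).elim (by simp [Tm.funs])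
        fun h => .inr (.inl h)
    · exact .inr (.inr ⟨by have := h.1; omega, h.2⟩)
  | exi x φ ih =>
    have hc := le_sk_snd (N := N) φ (Function.update ρ x (skTm N us c)) us (c + 1)
    rcases ih hφ _ _ _ hq with h | h | h
    · exact .inl h
    · refine (exists_mem_update (P := (q ∈ ·.funs)) h).elim (fun h => .inr (.inr ?_))
        fun h => .inr (.inl h)
      rw [Set.mem_Ico, fst_eq_of_mem_funs_skTm h]
      exact ⟨le_rfl, by change N + c < N + (sk N φ _ us (c + 1)).2; omega⟩
    · exact .inr (.inr ⟨by have := h.1; omega, h.2⟩)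

theorem funs_sk_lt {φ : Fml} (hφ : φ.IsNNF) (hN : ∀ q ∈ φ.funs, q.1 < N) {ρ : Subst}
    {us : List ℕ} {c : ℕ} (hρ : ∀ y ∈ φ.free, ∀ q ∈ (ρ y).funs, q.1 < N + c) :
    ∀ q ∈ (sk N φ ρ us c).1.funs, q.1 < N + (sk N φ ρ us c).2 := fun q hq => by
  have := le_sk_snd (N := N) φ ρ us c
  rcases mem_funs_sk hφ ρ us c hq with h | ⟨y, hy, h⟩ | h
  · exact (hN q h).trans_le (by omega)
  · exact (hρ y hy q h).trans_le (by omega)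
  · exact h.2

theorem forall_mem_append_lt {us : List ℕ} {c : ℕ} (hus : ∀ z ∈ us, z < c) :
    ∀ z ∈ us ++ [c], z < c + 1 := by
  simp only [List.mem_append, List.mem_singleton]
  rintro z (hz | rfl)
  exacts [(hus z hz).trans c.lt_succ_self, z.lt_succ_self]

theorem free_sk_lt {φ : Fml} (hφ : φ.IsNNF) {ρ : Subst} {us : List ℕ} {c : ℕ}
    (hρ : ∀ y ∈ φ.free, ∀ z ∈ (ρ y).vars, z < c) (hus : ∀ z ∈ us, z < c) :
    ∀ z ∈ (sk N φ ρ us c).1.free, z < (sk N φ ρ us c).2 := by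
  induction φ generalizing ρ us c with
  | tru | fls | atom | neg =>
    rw [sk_eq_of_isQF hφ, Fml.free_subst ρ hφ]
    intro z hz
    obtain ⟨y, hy, hz⟩ := Set.mem_iUnion₂.1 hz
    exact hρ y hy z hz
  | conj φ ψ ih₁ ih₂ | disj φ ψ ih₁ ih₂ =>
    have h₁ := le_sk_snd (N := N) φ ρ us c
    have h₂ := le_sk_snd (N := N) ψ ρ us (sk N φ ρ us c).2
    rintro z (hz | hz)
    · exact (ih₁ hφ.1 (fun y hy => hρ y (.inl hy)) hus z hz).trans_le h₂
    · exact ih₂ hφ.2 (fun y hy z hz => (hρ y (.inr hy) z hz).trans_le h₁)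
        (fun z hz => (hus z hz).trans_le h₁) z hz
  | all x φ ih =>
    exact ih hφ (forall_mem_update (fun t => ∀ z ∈ t.vars, z < c + 1)
      (fun y hy z hz => (hρ y hy z hz).trans c.lt_succ_self) (by simp [Tm.vars]))
      (forall_mem_append_lt hus)
  | exi x φ ih =>
    exact ih hφ (forall_mem_update (fun t => ∀ z ∈ t.vars, z < c + 1)
      (fun y hy z hz => (hρ y hy z hz).trans c.lt_succ_self)
      fun z hz => (hus z (mem_of_mem_vars_skTm hz)).trans c.lt_succ_self)
      fun z hz => (hus z hz).trans c.lt_succ_self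

/-- `φ` holds as soon as its Skolem form holds for all values of the variables that `sk`
introduces (those numbered from the counter on). -/
def SkReflects (N : ℕ) (φ : Fml) : Prop :=
  ∀ (D : Type) (M : Struc D) {ρ : Subst} {us : List ℕ} {c : ℕ},
    (∀ y ∈ φ.free, ∀ z ∈ (ρ y).vars, z < c) → (∀ z ∈ us, z < c) → ∀ a : ℕ → D,
    (∀ a', (∀ z < c, a' z = a z) → (sk N φ ρ us c).1.sat M a') → φ.sat M fun x => (ρ x).eval M a

section SkReflects

variable {φ ψ : Fml} {x : ℕ}

theorem skReflects_of_isQF (hq : φ.isQF) : SkReflects N φ := fun D M {ρ us c} _ _ a h => by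
  rw [sk_eq_of_isQF hq] at h
  exact (Fml.sat_subst M ρ hq a).1 (h a fun _ _ => rfl)

theorem SkReflects.conj (h₁ : SkReflects N φ) (h₂ : SkReflects N ψ) :
    SkReflects N (φ.conj ψ) := fun D M {ρ us c} hρ hus a h => by
  have hc := le_sk_snd (N := N) φ ρ us c
  exact ⟨h₁ D M (fun y hy => hρ y (.inl hy)) hus a fun a' ha' => (h a' ha').1,
    h₂ D M (fun y hy z hz => (hρ y (.inr hy) z hz).trans_le hc)
      (fun z hz => (hus z hz).trans_le hc) a
      fun a' ha' => (h a' fun z hz => ha' z (hz.trans_le hc)).2⟩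

theorem SkReflects.disj (h₁ : SkReflects N φ) (h₂ : SkReflects N ψ) (hφ : φ.IsNNF) :
    SkReflects N (φ.disj ψ) := fun D M {ρ us c} hρ hus a h => by
  have hc := le_sk_snd (N := N) φ ρ us c
  have hρ₁ : ∀ y ∈ φ.free, ∀ z ∈ (ρ y).vars, z < c := fun y hy => hρ y (.inl hy)
  refine or_iff_not_imp_left.2 fun hn => ?_
  obtain ⟨a₁, ha₁, hn₁⟩ : ∃ a₁, (∀ z < c, a₁ z = a z) ∧ ¬ (sk N φ ρ us c).1.sat M a₁ := by
    by_contra! h'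
    exact hn (h₁ D M hρ₁ hus a h')
  -- every `a'` agreeing with `a₁` below the next counter agrees with `a` below `c` and, like
  -- `a₁`, falsifies the Skolem form of `φ`, whose variables lie below the next counter
  refine (Fml.sat_congr ψ rfl (fun _ _ => rfl) fun y hy => ?_).1
    (h₂ D M (fun y hy z hz => (hρ y (.inr hy) z hz).trans_le hc)
      (fun z hz => (hus z hz).trans_le hc) a₁ fun a' ha' => ?_)
  · exact Tm.eval_congr _ (fun _ _ => rfl) fun z hz => ha₁ z (hρ y (.inr hy) z hz)
  · refine (h a' fun z hz => (ha' z (hz.trans_le hc)).trans (ha₁ z hz)).resolve_left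
      fun hs => hn₁ ((Fml.sat_congr _ rfl (fun _ _ => rfl) fun z hz => ?_).1 hs)
    exact ha' z (free_sk_lt hφ hρ₁ hus z hz)

theorem SkReflects.all (h : SkReflects N φ) : SkReflects N (.all x φ) :=
  fun D M {ρ us c} hρ hus a h' d => by
    have := h D M (forall_mem_update (fun t => ∀ z ∈ t.vars, z < c + 1)
      (fun y hy z hz => (hρ y hy z hz).trans c.lt_succ_self) (by simp [Tm.vars]))
      (forall_mem_append_lt hus) (Function.update a c d) fun a' ha' => h' a' fun z hz => by
        rw [ha' z (hz.trans c.lt_succ_self), Function.update_of_ne hz.ne]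
    rw [eval_comp_update] at this
    refine (Fml.sat_congr φ rfl (fun _ _ => rfl) fun y hy => ?_).1 this
    by_cases hyx : y = x
    · simp [hyx, Tm.eval]
    · simp only [Function.update_of_ne hyx]
      exact Tm.eval_congr _ (fun _ _ => rfl) fun z hz =>
        Function.update_of_ne (hρ y ⟨hy, hyx⟩ z hz).ne _ _

theorem SkReflects.exi (h : SkReflects N φ) : SkReflects N (.exi x φ) :=
  fun D M {ρ us c} hρ hus a h' => ⟨(skTm N us c).eval M a, by
    have := h D M (forall_mem_update (fun t => ∀ z ∈ t.vars, z < c + 1)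
      (fun y hy z hz => (hρ y hy z hz).trans c.lt_succ_self)
      fun z hz => (hus z (mem_of_mem_vars_skTm hz)).trans c.lt_succ_self)
      (fun z hz => (hus z hz).trans c.lt_succ_self) a
      fun a' ha' => h' a' fun z hz => ha' z (hz.trans c.lt_succ_self)
    rwa [eval_comp_update] at this⟩

theorem skReflects (hφ : φ.IsNNF) : SkReflects N φ := by
  induction φ with
  | tru | fls | atom | neg => exact skReflects_of_isQF hφ
  | conj φ ψ ih₁ ih₂ => exact SkReflects.conj (ih₁ hφ.1) (ih₂ hφ.2)
  | disj φ ψ ih₁ ih₂ => exact SkReflects.disj (ih₁ hφ.1) (ih₂ hφ.2) hφ.1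
  | all x φ ih => exact SkReflects.all (ih hφ)
  | exi x φ ih => exact SkReflects.exi (ih hφ)

end SkReflects

end Skolemization


section SkolemExpansion

variable {N : ℕ} {D : Type} [Nonempty D]

theorem exists_skolem_fn (M : Struc D) (φ : Fml) (x : ℕ) (ρ : Subst) (us : List ℕ)
    (hρ : ∀ y ∈ φ.free \ {x}, ∀ z ∈ (ρ y).vars, z ∈ us) :
    ∃ f : (n : ℕ) → (Fin n → D) → D, ∀ a, (Fml.exi x φ).sat M (fun y => (ρ y).eval M a) →
      φ.sat M (Function.update (fun y => (ρ y).eval M a) x (f us.length fun i => a us[i])) := by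
  let extend (n : ℕ) (dv : Fin n → D) (z : ℕ) : D :=
    if h : us.idxOf z < n then dv ⟨_, h⟩ else Classical.arbitrary D
  refine ⟨fun n dv => Classical.epsilon fun d =>
    φ.sat M (Function.update (fun y => (ρ y).eval M (extend n dv)) x d), fun a ha => ?_⟩
  have key : ∀ d,
      φ.sat M (Function.update (fun y => (ρ y).eval M (extend _ fun i => a us[i])) x d) ↔
        φ.sat M (Function.update (fun y => (ρ y).eval M a) x d) := fun d =>
    Fml.sat_congr φ rfl (fun _ _ => rfl) fun y hy => by
      by_cases hyx : y = x
      · simp [hyx]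
      · simp only [Function.update_of_ne hyx]
        refine Tm.eval_congr _ (fun _ _ => rfl) fun z hz => ?_
        simp [extend, List.idxOf_lt_length_iff.2 (hρ y ⟨hy, hyx⟩ z hz)]
  exact (key _).1 (Classical.epsilon_spec (ha.imp fun d => (key d).2))

/-- The Skolem symbols that `sk` introduces can be interpreted, changing no other symbol, so
that `φ` implies its Skolem form. -/
def SkExpands (N : ℕ) (φ : Fml) : Prop :=
  ∀ (D : Type) [Nonempty D] (M : Struc D) {ρ : Subst} {us : List ℕ} {c : ℕ},
    (∀ y ∈ φ.free, ∀ q ∈ (ρ y).funs, q.1 < N + c) → (∀ y ∈ φ.free, ∀ z ∈ (ρ y).vars, z ∈ us) →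
    ∃ M' : Struc D, agreeExcept M M' (Prod.fst ⁻¹' Set.Ico (N + c) (N + (sk N φ ρ us c).2)) ∧
      ∀ a, φ.sat M' (fun x => (ρ x).eval M' a) → (sk N φ ρ us c).1.sat M' a

section SkExpands

variable {φ ψ : Fml} {x : ℕ}

theorem skExpands_of_isQF (hq : φ.isQF) : SkExpands N φ := fun D _ M {ρ us c} _ _ =>
  ⟨M, agreeExcept_refl M _, fun a h => by
    rw [sk_eq_of_isQF hq]
    exact (Fml.sat_subst M ρ hq a).2 h⟩

/-- The common part of the cases `φ ∧ ψ` and `φ ∨ ψ`: expand for `φ`, then for `ψ`. -/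
theorem SkExpands.exists_pair (h₁ : SkExpands N φ) (h₂ : SkExpands N ψ) (hφ : φ.IsNNF)
    (hN : ∀ q ∈ φ.funs, q.1 < N) (M : Struc D) {ρ : Subst} {us : List ℕ} {c : ℕ}
    (hρf : ∀ y ∈ φ.free ∪ ψ.free, ∀ q ∈ (ρ y).funs, q.1 < N + c)
    (hρv : ∀ y ∈ φ.free ∪ ψ.free, ∀ z ∈ (ρ y).vars, z ∈ us) :
    ∃ M' : Struc D, agreeExcept M M' (Prod.fst ⁻¹' Set.Ico (N + c)
        (N + (sk N ψ ρ us (sk N φ ρ us c).2).2)) ∧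
      (∀ a, φ.sat M' (fun x => (ρ x).eval M' a) → (sk N φ ρ us c).1.sat M' a) ∧
      ∀ a, ψ.sat M' (fun x => (ρ x).eval M' a) → (sk N ψ ρ us (sk N φ ρ us c).2).1.sat M' a := by
  have hle₁ := le_sk_snd (N := N) φ ρ us c
  have hle₂ := le_sk_snd (N := N) ψ ρ us (sk N φ ρ us c).2
  have hρ₁ : ∀ y ∈ φ.free, ∀ q ∈ (ρ y).funs, q.1 < N + c := fun y hy => hρf y (.inl hy)
  obtain ⟨M₁, hM₁, h₁⟩ := h₁ D M hρ₁ fun y hy => hρv y (.inl hy)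
  obtain ⟨M₂, hM₂, h₂⟩ := h₂ D M₁ (c := (sk N φ ρ us c).2)
    (fun y hy q hq => (hρf y (.inr hy) q hq).trans_le (by omega)) fun y hy => hρv y (.inr hy)
  refine ⟨M₂, hM₁.trans_Ico hM₂ (by omega) (Nat.add_le_add_left hle₂ N), fun a h => ?_, h₂⟩
  -- `M₂` changes only symbols of `ψ`'s Skolem form, which occur neither in `φ` nor in its
  -- Skolem form
  have e₁ := hM₂.sat_comp_iff (fun q hq => (hN q hq).trans_le (by omega))
    (fun y hy q hq => (hρ₁ y hy q hq).trans_le (by omega)) a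
  have e₂ := hM₂.sat_iff (funs_sk_lt hφ hN hρ₁) (a := a) fun _ _ => rfl
  exact e₂.2 (h₁ a (e₁.1 h))

theorem SkExpands.conj (h₁ : SkExpands N φ) (h₂ : SkExpands N ψ) (hφ : φ.IsNNF)
    (hN : ∀ q ∈ φ.funs, q.1 < N) : SkExpands N (φ.conj ψ) := fun _ _ M _ _ _ hρf hρv =>
  (h₁.exists_pair h₂ hφ hN M hρf hρv).imp fun _ h => ⟨h.1, fun a => And.imp (h.2.1 a) (h.2.2 a)⟩

theorem SkExpands.disj (h₁ : SkExpands N φ) (h₂ : SkExpands N ψ) (hφ : φ.IsNNF)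
    (hN : ∀ q ∈ φ.funs, q.1 < N) : SkExpands N (φ.disj ψ) := fun _ _ M _ _ _ hρf hρv =>
  (h₁.exists_pair h₂ hφ hN M hρf hρv).imp fun _ h => ⟨h.1, fun a => Or.imp (h.2.1 a) (h.2.2 a)⟩

theorem SkExpands.all (h : SkExpands N φ) : SkExpands N (.all x φ) :=
  fun D _ M {ρ us c} hρf hρv => by
    obtain ⟨M', hM', h'⟩ := h D M (ρ := Function.update ρ x (.var c)) (c := c + 1)
      (forall_mem_update (fun t => ∀ q ∈ t.funs, q.1 < N + (c + 1))
        (fun y hy q hq => (hρf y hy q hq).trans_le (by omega)) (by simp [Tm.funs]))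
      (forall_mem_update (fun t => ∀ z ∈ t.vars, z ∈ us ++ [c])
        (fun y hy z hz => List.mem_append_left _ (hρv y hy z hz)) (by simp [Tm.vars]))
    refine ⟨M', hM'.mono fun q hq => ⟨by simp at hq ⊢; omega, hq.2⟩, fun a h => h' a ?_⟩
    rw [eval_comp_update]
    exact h (a c)

/-- The Skolem symbol `N + c` is interpreted by a Skolem function chosen in `M`; the
expansion for `φ` then leaves it unchanged. -/
theorem SkExpands.exi (h : SkExpands N φ) (hN : ∀ q ∈ φ.funs, q.1 < N) :
    SkExpands N (.exi x φ) := fun D _ M {ρ us c} hρf hρv => by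
  obtain ⟨f, hf⟩ := exists_skolem_fn M φ x ρ us hρv
  let M₀ : Struc D := { M with fn := Function.update M.fn (N + c) f }
  have hM₀ : agreeExcept M M₀ (Prod.fst ⁻¹' Set.Ico (N + c) (N + (c + 1))) :=
    ⟨rfl, fun g n hg => by
      simp only [M₀, Function.update_of_ne (show g ≠ N + c by simp at hg; omega)]⟩
  obtain ⟨M₁, hM₁, h₁⟩ := h D M₀ (ρ := Function.update ρ x (skTm N us c)) (c := c + 1)
    (forall_mem_update (fun t => ∀ q ∈ t.funs, q.1 < N + (c + 1))
      (fun y hy q hq => (hρf y hy q hq).trans_le (by omega))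
      fun q hq => by rw [fst_eq_of_mem_funs_skTm hq]; omega)
    (forall_mem_update (fun t => ∀ z ∈ t.vars, z ∈ us) hρv fun z hz => mem_of_mem_vars_skTm hz)
  have hM := hM₀.trans_Ico hM₁ (by omega) (Nat.add_le_add_left (le_sk_snd _ _ _ _) N)
  refine ⟨M₁, hM, fun a h => h₁ a ?_⟩
  have hfx : (skTm N us c).eval M₁ a = f us.length fun i => a us[i] := by
    change M₁.fn (N + c) us.length _ = _
    rw [hM₁.2 (N + c) us.length (by simp)]
    simp [M₀, Tm.eval]
  rw [eval_comp_update, hfx]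
  have hNc : ∀ q ∈ φ.funs, q.1 < N + c := fun q hq => (hN q hq).trans_le (by omega)
  refine (hM.sat_iff hNc fun y hy => ?_).2
    (hf a ((hM.sat_comp_iff (φ := .exi x φ) hNc hρf a).1 h))
  by_cases hyx : y = x
  · simp [hyx]
  · simp only [Function.update_of_ne hyx]
    exact hM.eval_eq (hρf y ⟨hy, hyx⟩) a

theorem skExpands (hφ : φ.IsNNF) (hN : ∀ q ∈ φ.funs, q.1 < N) : SkExpands N φ := by
  induction φ with
  | tru | fls | atom | neg => exact skExpands_of_isQF hφ
  | conj φ ψ ih₁ ih₂ =>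
    exact SkExpands.conj (ih₁ hφ.1 fun q hq => hN q (.inl hq))
      (ih₂ hφ.2 fun q hq => hN q (.inr hq)) hφ.1 fun q hq => hN q (.inl hq)
  | disj φ ψ ih₁ ih₂ =>
    exact SkExpands.disj (ih₁ hφ.1 fun q hq => hN q (.inl hq))
      (ih₂ hφ.2 fun q hq => hN q (.inr hq)) hφ.1 fun q hq => hN q (.inl hq)
  | all x φ ih => exact SkExpands.all (ih hφ hN)
  | exi x φ ih => exact SkExpands.exi (ih hφ hN) hN

end SkExpands

end SkolemExpansion

section SkolemForm

variable {N : ℕ} {φ : Fml} {b : Bool}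

/-- The Skolem form of the sentence `φ` (of `¬φ` if `b = false`), with Skolem symbols numbered
from `N`, together with the final value of the counter. -/
def skolem (N : ℕ) (φ : Fml) (b : Bool) : Fml × ℕ := sk N (φ.nnf b) Tm.var [] 0

theorem isQF_skolem : (skolem N φ b).1.isQF := isQF_sk (φ.isNNF_nnf b) _ _ _

theorem preds_skolem_subset : (skolem N φ b).1.preds b ⊆ φ.pred :=
  (preds_sk_subset _ _ _ _ b).trans (by simp [Fml.preds_nnf, Fml.pred])

theorem funs_skolem_subset (hφ : φ.isSentence) :
    (skolem N φ b).1.funs ⊆ φ.funs ∪ Prod.fst ⁻¹' Set.Ico N (N + (skolem N φ b).2) :=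
  fun q hq => by
    rcases mem_funs_sk (φ.isNNF_nnf b) _ _ _ hq with h | ⟨y, hy, -⟩ | h
    · exact .inl (Fml.funs_nnf φ b ▸ h)
    · exact ((Fml.free_nnf φ b ▸ hφ : (φ.nnf b).free = ∅) ▸ hy).elim
    · exact .inr (by simpa [skolem] using h)

theorem sat_of_forall_sat_skolem (hφ : φ.isSentence) {D : Type} {M : Struc D}
    (h : ∀ a, (skolem N φ b).1.sat M a) (a : ℕ → D) : cond b (φ.sat M a) (¬ φ.sat M a) :=
  (Fml.sat_nnf M φ b a).1 <| skReflects (φ.isNNF_nnf b) D M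
    (by simp [Fml.free_nnf, show φ.free = ∅ from hφ]) (by simp) a fun a' _ => h a'

theorem exists_expansion_skolem (hφ : φ.isSentence) (hN : ∀ q ∈ φ.funs, q.1 < N) {D : Type}
    [Nonempty D] (M : Struc D) (h : ∀ a, cond b (φ.sat M a) (¬ φ.sat M a)) :
    ∃ M', agreeExcept M M' (Prod.fst ⁻¹' Set.Ico N (N + (skolem N φ b).2)) ∧
      ∀ a, (skolem N φ b).1.sat M' a := by
  have hs : (φ.nnf b).free = ∅ := Fml.free_nnf φ b ▸ hφ
  have hN' : ∀ q ∈ (φ.nnf b).funs, q.1 < N := Fml.funs_nnf φ b ▸ hN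
  obtain ⟨M', hM', h'⟩ := skExpands (φ.isNNF_nnf b) hN' D M (c := 0) (by simp [hs]) (by simp [hs])
  exact ⟨M', hM', fun a =>
    h' a ((hM'.sat_iff hN' fun _ _ => rfl).2 ((Fml.sat_nnf M φ b a).2 (h a)))⟩

theorem not_forall_sat_skolem {F G : Fml} (hF : F.isSentence) (hG : G.isSentence)
    (h : entails F G) (N N' : ℕ) (D : Type) (M : Struc D) (hD : Nonempty D) :
    ¬ ∀ a, ((skolem N F true).1.conj (skolem N' G false).1).sat M a := fun hs =>
  let a : ℕ → D := fun _ => Classical.arbitrary D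
  sat_of_forall_sat_skolem hG (fun a => (hs a).2) a
    (h D hD M a (sat_of_forall_sat_skolem hF (fun a => (hs a).1) a))

end SkolemForm

/-- The variable `y` of the `i`-th copy of a formula. -/
def copyVar (i : ℕ) : Subst := fun y => .var (Nat.pair i y)

def instSubst (σ : ℕ → Subst) : Subst := fun z => σ z.unpair.1 z.unpair.2

def Fml.copies (ψ : Fml) (n : ℕ) : Fml :=
  conjList ((List.range n).map fun i => ψ.subst (copyVar i))

namespace Fml

variable {ψ : Fml} {n : ℕ}

theorem isQF_copies (hq : ψ.isQF) : (ψ.copies n).isQF :=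
  isQF_conjList fun _ h => by obtain ⟨i, -, rfl⟩ := List.mem_map.1 h; exact hq.subst _

theorem sat_copies (hq : ψ.isQF) {D : Type} {M : Struc D} (h : ∀ a, ψ.sat M a) (a : ℕ → D) :
    (ψ.copies n).sat M a :=
  (sat_conjList M a).2 fun _ h' => by
    obtain ⟨i, -, rfl⟩ := List.mem_map.1 h'
    exact (sat_subst M _ hq a).2 (h _)

theorem peval_subst_instSubst_copies (hq : ψ.isQF) (σ : ℕ → Subst) (v : Val) :
    ((ψ.copies n).subst (instSubst σ)).peval v ↔ ∀ i < n, (ψ.subst (σ i)).peval v := by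
  have : ∀ i, (ψ.subst (copyVar i)).subst (instSubst σ) = ψ.subst (σ i) := fun i => by
    rw [subst_subst _ _ hq]
    congr
    funext y
    simp [copyVar, instSubst, Tm.subst]
  simp [copies, subst_conjList, peval_conjList, this]

theorem funs_copies (hq : ψ.isQF) (hn : 0 < n) : (ψ.copies n).funs = ψ.funs := by
  have : ∀ i, (ψ.subst (copyVar i)).funs = ψ.funs := fun i => by
    simp [funs_subst _ hq, copyVar, Tm.funs]
  simp only [copies, funs_conjList, List.mem_map, List.mem_range]
  ext q
  simp only [Set.mem_iUnion, exists_prop]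
  exact ⟨fun ⟨_, ⟨i, _, h⟩, hq⟩ => this i ▸ h ▸ hq,
    fun hq => ⟨_, ⟨0, hn, rfl⟩, (this 0).symm ▸ hq⟩⟩

theorem preds_copies_subset (b : Bool) : (ψ.copies n).preds b ⊆ ψ.preds b := by
  intro q h
  simp only [copies, preds_conjList, List.mem_map, Set.mem_iUnion] at h
  obtain ⟨_, ⟨i, -, rfl⟩, h⟩ := h
  rwa [preds_subst] at h

end Fml

noncomputable def Subst.restrict (θ : Subst) (s : Set ℕ) : Subst :=
  fun z => if z ∈ s then θ z else .var z

section Restrict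

variable {θ : Subst} {s : Set ℕ} {S : Set (ℕ × ℕ)}

theorem Subst.dom_restrict (hθ : ∀ z, (θ z).builtFrom S) : (θ.restrict s).dom = s := by
  ext z
  by_cases hz : z ∈ s
  · simpa [dom, restrict, hz] using fun h => by simpa [h, Tm.builtFrom] using hθ z
  · simp [dom, restrict, hz]

theorem Subst.builtFrom_restrict (hθ : ∀ z, (θ z).builtFrom S) {z : ℕ}
    (hz : z ∈ (θ.restrict s).dom) : (θ.restrict s z).builtFrom S := by
  rw [dom_restrict hθ] at hz
  simpa [restrict, hz] using hθ z

theorem Fml.subst_restrict {φ : Fml} (hq : φ.isQF) (hs : φ.free ⊆ s) :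
    φ.subst (θ.restrict s) = φ.subst θ :=
  subst_congr hq fun _ hx => if_pos (hs hx)

theorem Fml.free_subst_eq_empty {φ : Fml} (hq : φ.isQF) (hθ : ∀ z, (θ z).builtFrom S) :
    (φ.subst θ).free = ∅ := by
  simp [free_subst θ hq, fun z => Tm.builtFrom.vars_eq_empty (hθ z)]

end Restrict

/-- A Herbrand refutation `σ` of the Skolem forms `ψF` of `F` and `ψG` of `¬G` lifts to an
interpolant lifting base. -/
theorem exists_isLiftBase_of_instances {F G ψF ψG : Fml} {FS GS : Set (ℕ × ℕ)} {c₀ n : ℕ}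
    {σ : ℕ → Subst} (hF : F.isSentence) (hG : G.isSentence) (hqF : ψF.isQF) (hqG : ψG.isQF)
    (hFG : FS ∩ GS = ∅) (hFGS : F.funs ∩ GS = ∅) (hGFS : G.funs ∩ FS = ∅)
    (hc₀ : (c₀, 0) ∈ FS ∪ GS)
    (hexpF : ∀ (D : Type), Nonempty D → ∀ M : Struc D, (∀ a, F.sat M a) →
      ∃ M', agreeExcept M M' FS ∧ ∀ a, ψF.sat M' a)
    (hexpG : ∀ (D : Type), Nonempty D → ∀ M : Struc D, (∀ a, ¬ G.sat M a) →
      ∃ M', agreeExcept M M' GS ∧ ∀ a, ψG.sat M' a)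
    (hpredF : ψF.pred ⊆ F.pred) (hpredG : ψG.preds false ⊆ G.pred)
    (hfunsF : ψF.funs ⊆ (F.funs ∩ G.funs) ∪ FS) (hfunsG : ψG.funs ⊆ (F.funs ∩ G.funs) ∪ GS)
    (hσ : ∀ i x, (σ i x).builtFrom (insert (c₀, 0) (ψF.conj ψG).funs))
    (hrefute : ∀ v, ∃ i < n, ¬ ((ψF.conj ψG).subst (σ i)).peval v) :
    ∃ Hg θ, IsLiftBase F G FS GS Hg (ψF.copies n) (ψG.copies n).neg θ := by
  set Fe := ψF.copies n
  set Ge := (ψG.copies n).neg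
  have hθ : ∀ z, (instSubst σ z).builtFrom (insert (c₀, 0) (ψF.conj ψG).funs) := fun _ => hσ _ _
  set θ := (instSubst σ).restrict (Fe.free ∪ Ge.free)
  have hn : 0 < n := by obtain ⟨i, hi, -⟩ := hrefute fun _ => True; omega
  have hFe : Fe.subst θ = Fe.subst (instSubst σ) :=
    Fml.subst_restrict (Fml.isQF_copies hqF) Set.subset_union_left
  have hGe : (ψG.copies n).subst θ = (ψG.copies n).subst (instSubst σ) :=
    Fml.subst_restrict (Fml.isQF_copies hqG) Set.subset_union_right
  obtain ⟨Hg, hHg, hint⟩ := exists_ground_CLInterp (A := Fe.subst θ) (B := Ge.subst θ)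
    ⟨(Fml.isQF_copies hqF).subst θ, hFe ▸ Fml.free_subst_eq_empty (Fml.isQF_copies hqF) hθ⟩
    ((Fml.isQF_copies hqG).subst θ) fun v hv hv' => by
      rw [hFe, Fml.peval_subst_instSubst_copies hqF] at hv
      rw [hGe, Fml.peval_subst_instSubst_copies hqG] at hv'
      obtain ⟨i, hi, hvi⟩ := hrefute v
      exact hvi ⟨hv i hi, hv' i hi⟩
  refine ⟨Hg, θ, hF, hG, hFG, hHg, Fml.isQF_copies hqF, Fml.isQF_copies hqG,
    fun x hx => (Subst.builtFrom_restrict hθ hx).vars_eq_empty, fun D hD M hM => ?_,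
    fun D hD M hM a => ?_, (Fml.preds_copies_subset true).trans hpredF,
    (Fml.preds_copies_subset false).trans hpredG, Fml.funs_copies hqF hn ▸ hfunsF,
    Fml.funs_copies hqG hn ▸ hfunsG, hFGS, hGFS, Subst.dom_restrict hθ,
    ⟨c₀, hc₀, fun x hx => (Subst.builtFrom_restrict hθ hx).funs_subset.trans ?_⟩, hint⟩
  · obtain ⟨M', hM', h'⟩ := hexpF D hD M hM
    exact ⟨M', hM', Fml.sat_copies hqF h'⟩
  · by_contra hGa
    obtain ⟨M', hM', h'⟩ := hexpG D hD M fun a' h => hGa (Fml.sat_of_isSentence hG h a)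
    obtain ⟨a', ha'⟩ := hM M' hM'
    exact ha' (Fml.sat_copies hqG h' a')
  · rintro q (rfl | hq)
    · exact .inr rfl
    · refine .inl ?_
      simpa [Fe, Ge, Fml.funs, Fml.funs_copies hqF hn, Fml.funs_copies hqG hn] using hq

/-- The set `𝔽`: the symbols of `F` not in `G`, and the Skolem symbols of `F`, numbered in
`[N, N')`. -/
def leftSymbols (F G : Fml) (N N' : ℕ) : Set (ℕ × ℕ) :=
  (F.funs \ G.funs) ∪ Prod.fst ⁻¹' Set.Ico N N'

/-- The set `𝔾`: the symbols of `G` not in `F`, and all symbols numbered from `N'` on (the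
Skolem symbols of `¬G` and the constant of the Herbrand universe). -/
def rightSymbols (F G : Fml) (N' : ℕ) : Set (ℕ × ℕ) :=
  (G.funs \ F.funs) ∪ Prod.fst ⁻¹' Set.Ici N'

section Symbols

variable {F G : Fml} {N N' : ℕ}

theorem leftSymbols_inter_rightSymbols (hF : ∀ q ∈ F.funs, q.1 < N)
    (hG : ∀ q ∈ G.funs, q.1 < N) (hNN' : N ≤ N') :
    leftSymbols F G N N' ∩ rightSymbols F G N' = ∅ := by
  refine Set.eq_empty_of_forall_notMem ?_
  rintro q ⟨⟨hqF, hqG⟩ | ⟨hN, hN'⟩, ⟨hqG', -⟩ | hN''⟩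
  · exact hqG hqG'
  · exact absurd (hF q hqF) (by simp at hN''; omega)
  · exact absurd (hG q hqG') (by omega)
  · simp at hN''; omega

theorem funs_inter_rightSymbols (hF : ∀ q ∈ F.funs, q.1 < N) (hNN' : N ≤ N') :
    F.funs ∩ rightSymbols F G N' = ∅ := by
  refine Set.eq_empty_of_forall_notMem ?_
  rintro q ⟨hqF, ⟨-, hqF'⟩ | hN'⟩
  · exact hqF' hqF
  · exact absurd (hF q hqF) (by simp at hN'; omega)

theorem funs_inter_leftSymbols (hG : ∀ q ∈ G.funs, q.1 < N) :
    G.funs ∩ leftSymbols F G N N' = ∅ := by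
  refine Set.eq_empty_of_forall_notMem ?_
  rintro q ⟨hqG, ⟨-, hqG'⟩ | ⟨hN, -⟩⟩
  · exact hqG' hqG
  · exact absurd (hG q hqG) (by omega)

theorem union_subset_leftSymbols :
    F.funs ∪ Prod.fst ⁻¹' Set.Ico N N' ⊆ (F.funs ∩ G.funs) ∪ leftSymbols F G N N' := by
  rintro q (hqF | hq)
  · by_cases hqG : q ∈ G.funs
    exacts [.inl ⟨hqF, hqG⟩, .inr (.inl ⟨hqF, hqG⟩)]
  · exact .inr (.inr hq)

theorem union_subset_rightSymbols {c : ℕ} :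
    G.funs ∪ Prod.fst ⁻¹' Set.Ico N' c ⊆ (F.funs ∩ G.funs) ∪ rightSymbols F G N' := by
  rintro q (hqG | hq)
  · by_cases hqF : q ∈ F.funs
    exacts [.inl ⟨hqF, hqG⟩, .inr (.inl ⟨hqG, hqF⟩)]
  · exact .inr (.inr hq.1)

end Symbols

/-- Existence of an interpolant lifting base. If `F` and `G` are
first-order sentences without equality with F ⊨ G, then there exists an interpolant
lifting base whose first two components are `F` and `G`. -/
theorem statement10 (F G : Fml) (hF : F.isSentence) (hG : G.isSentence)
    (h : entails F G) :
    ∃ (FS GS : Set (ℕ × ℕ)) (Hg Fe Ge : Fml) (θ : Subst),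
      IsLiftBase F G FS GS Hg Fe Ge θ := by
  obtain ⟨N, hN⟩ := (F.conj G).exists_funs_lt
  have hNF : ∀ q ∈ F.funs, q.1 < N := fun q hq => hN q (.inl hq)
  have hNG : ∀ q ∈ G.funs, q.1 < N := fun q hq => hN q (.inr hq)
  -- the Skolem symbols of `F` are numbered from `N`, those of `¬G` from `N'`; `c₀` is fresh
  set sF := skolem N F true
  set N' := N + sF.2
  set sG := skolem N' G false
  set c₀ := N' + sG.2
  have hq : (sF.1.conj sG.1).isQF := ⟨isQF_skolem, isQF_skolem⟩
  obtain ⟨n, σ, hσ, hrefute⟩ := exists_unsat_instances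
    ⟨.app c₀ 0 Fin.elim0, Set.mem_insert _ _, fun i => i.elim0⟩ hq (Set.subset_insert _ _)
    (not_forall_sat_skolem hF hG h N N')
  obtain ⟨Hg, θ, hbase⟩ := exists_isLiftBase_of_instances (FS := leftSymbols F G N N')
    (GS := rightSymbols F G N') hF hG hq.1 hq.2
    (leftSymbols_inter_rightSymbols hNF hNG le_self_add) (funs_inter_rightSymbols hNF le_self_add)
    (funs_inter_leftSymbols hNG) (.inr (by simp [rightSymbols, c₀]))
    (fun D _ M hM => (exists_expansion_skolem (b := true) hF hNF M hM).imp fun _ h =>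
      ⟨h.1.mono Set.subset_union_right, h.2⟩)
    (fun D _ M hM => (exists_expansion_skolem (b := false) hG
      (fun q hq => (hNG q hq).trans_le le_self_add) M hM).imp fun _ h =>
        ⟨h.1.mono fun q hq => .inr hq.1, h.2⟩)
    preds_skolem_subset preds_skolem_subset
    ((funs_skolem_subset hF).trans union_subset_leftSymbols)
    ((funs_skolem_subset hG).trans union_subset_rightSymbols) hσ hrefute
  exact ⟨_, _, _, _, _, _, hbase⟩
end CTIF
end

section
/- Let F, G, 𝔽, 𝔾, H_grd be the first five components of an interpolant lifting base and let 𝔽𝔾 = 𝔽 ∪ 𝔾. Let {t₁,…,tₙ} be the set of the 𝔽𝔾-terms with an 𝔽𝔾-terms-maximal occurrence in H_grd, ordered such that if tᵢ is a strict subterm of tⱼ then i < j. Let v₁,…,vₙ be fresh variables, let σ be the injective substitution {vᵢ ↦ tᵢ | 1 ≤ i ≤ n}, and for each i let Qᵢ = ∃ if tᵢ is an 𝔽-term and Qᵢ = ∀ if tᵢ is a 𝔾-term. Then Q₁v₁ … Qₙvₙ H_grd⁻σ is a Craig-Lyndon interpolant of F and G. -/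
open Classical

namespace CTIF

/-!
Write `K = H_grd⁻σ`, so that `Kσ = H_grd`. Expand a model of `F` to a model of `F_exp`; there
`H_grd = Kσ` holds under every assignment. Play the prefix from the outside in, keeping each
variable `vⱼ` played so far bound to the value of `tⱼ`. An existential `vᵢ` takes the value of
`tᵢ`. A universal `vᵢ` abstracts a 𝔾-term, and its value can be redefined to any `d` by passing
to a term-tracking structure over `D × Tm`; this changes neither `F_exp` nor `K` (no 𝔾-symbols)
nor the values of the earlier `tⱼ` (none contains `tᵢ`). Once the prefix is played, `K` holds
because `Kσ` does. The entailment of `G` is dual, with `¬G_exp`, `¬K`, and `∃`, `∀` exchanged.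
-/

theorem Tm.isGround.arg {f m : ℕ} {ts : Fin m → Tm} (h : (Tm.app f m ts).isGround)
    (i : Fin m) : (ts i).isGround :=
  Set.iUnion_eq_empty.mp h i

theorem Tm.eval_congr_s11 {D : Type} (M : Struc D) :
    ∀ (t : Tm) {a b : ℕ → D}, (∀ x ∈ t.vars, a x = b x) → t.eval M a = t.eval M b
  | .var x, _, _, h => h x rfl
  | .app f m ts, a, b, h => by
    simp only [Tm.eval]
    congr 1
    funext i
    exact Tm.eval_congr_s11 M (ts i) fun x hx => h x (Set.mem_iUnion_of_mem i hx)

theorem Tm.eval_of_isGround {D : Type} (M : Struc D) {t : Tm} (ht : t.isGround)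
    (a b : ℕ → D) : t.eval M a = t.eval M b :=
  t.eval_congr_s11 M fun x hx => absurd (ht ▸ hx) (Set.notMem_empty x)

theorem Fml.sat_congr_s11 {D : Type} (M : Struc D) (F : Fml) {a b : ℕ → D}
    (h : ∀ x ∈ F.free, a x = b x) : F.sat M a ↔ F.sat M b := by
  induction F generalizing a b with
  | tru | fls => rfl
  | atom p m ts =>
    simp only [Fml.sat]
    congr! 2 with i
    exact (ts i).eval_congr_s11 M fun x hx => h x (Set.mem_iUnion_of_mem i hx)
  | neg F ih => exact not_congr (ih h)
  | conj F G ihF ihG | disj F G ihF ihG =>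
    simp only [Fml.sat]
    rw [ihF fun x hx => h x (Or.inl hx), ihG fun x hx => h x (Or.inr hx)]
  | all y F ih | exi y F ih =>
    have hupd (d : D) : F.sat M (Function.update a y d) ↔ F.sat M (Function.update b y d) := by
      refine ih fun x hx => ?_
      by_cases hxy : x = y
      · simp [hxy]
      · simp only [Function.update_of_ne hxy]
        exact h x ⟨hx, hxy⟩
    simp only [Fml.sat, hupd]

theorem Fml.sat_of_isSentence_s11 {D : Type} (M : Struc D) {F : Fml} (hF : F.isSentence)
    {a : ℕ → D} (h : F.sat M a) (b : ℕ → D) : F.sat M b :=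
  (F.sat_congr_s11 M fun x hx => absurd (hF ▸ hx) (Set.notMem_empty x)).mp h

theorem Tm.eval_subst_s11 {D : Type} (M : Struc D) (σ : Subst) (a : ℕ → D) :
    ∀ t : Tm, (t.subst σ).eval M a = t.eval M fun x => (σ x).eval M a
  | .var _ => rfl
  | .app f m ts => by
    simp only [Tm.subst, Tm.eval]
    congr 1
    funext i
    exact Tm.eval_subst_s11 M σ a (ts i)

theorem Subst.isGround.update_var {σ : Subst} (hσ : σ.isGround) (y : ℕ) :
    Subst.isGround (Function.update σ y (.var y)) := by
  intro x hx
  by_cases hxy : x = y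
  · subst hxy
    simp [Subst.dom] at hx
  · rw [Function.update_of_ne hxy]
    exact hσ x (by simpa [Subst.dom, Function.update_of_ne hxy] using hx)

theorem Subst.isGround.eval_update {D : Type} (M : Struc D) {σ : Subst} (hσ : σ.isGround)
    (a : ℕ → D) (y : ℕ) (d : D) :
    (fun x => (Function.update σ y (.var y) x).eval M (Function.update a y d)) =
      Function.update (fun x => (σ x).eval M a) y d := by
  funext x
  by_cases hxy : x = y
  · subst hxy
    simp [Tm.eval]
  · simp only [Function.update_of_ne hxy]
    by_cases hx : x ∈ σ.dom
    · exact Tm.eval_of_isGround M (hσ x hx) _ _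
    · rw [show σ x = .var x from not_not.mp hx]
      simp [Tm.eval, Function.update_of_ne hxy]

/-- `Fml.subst` does not rename bound variables; ground ranges make that harmless. -/
theorem Fml.sat_subst_s11 {D : Type} (M : Struc D) (F : Fml) {σ : Subst} (hσ : σ.isGround)
    (a : ℕ → D) : (F.subst σ).sat M a ↔ F.sat M fun x => (σ x).eval M a := by
  induction F generalizing σ a with
  | tru | fls => rfl
  | atom p m ts => simp only [Fml.subst, Fml.sat, Tm.eval_subst_s11]
  | neg F ih => exact not_congr (ih hσ a)
  | conj F G ihF ihG | disj F G ihF ihG =>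
    simp only [Fml.subst, Fml.sat]
    rw [ihF hσ a, ihG hσ a]
  | all y F ih | exi y F ih =>
    have hupd (d : D) := (ih (hσ.update_var y) (Function.update a y d)).trans
      (by rw [hσ.eval_update M a y d])
    simp only [Fml.subst, Fml.sat, hupd]

section Transfer

variable {D D' : Type} {N : Struc D} {N' : Struc D'} {h : D' → D} {S : Set (ℕ × ℕ)}

theorem Tm.eval_map (hfn : ∀ f m p, (f, m) ∉ S → h (N'.fn f m p) = N.fn f m (h ∘ p))
    (a : ℕ → D') : ∀ t : Tm, (∀ q ∈ t.funs, q ∉ S) → h (t.eval N' a) = t.eval N (h ∘ a)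
  | .var _, _ => rfl
  | .app f m ts, ht => by
    simp only [Tm.eval]
    rw [hfn f m _ (ht _ (Set.mem_insert _ _))]
    congr 1
    funext i
    exact Tm.eval_map hfn a (ts i) fun q hq =>
      ht q (Set.mem_insert_of_mem _ (Set.mem_iUnion_of_mem i hq))

theorem Fml.sat_map (hh : Function.Surjective h)
    (hfn : ∀ f m p, (f, m) ∉ S → h (N'.fn f m p) = N.fn f m (h ∘ p))
    (hpr : ∀ p m q, N'.pr p m q ↔ N.pr p m (h ∘ q))
    (F : Fml) (hF : ∀ q ∈ F.funs, q ∉ S) (a : ℕ → D') : F.sat N' a ↔ F.sat N (h ∘ a) := by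
  induction F generalizing a with
  | tru | fls => rfl
  | atom p m ts =>
    simp only [Fml.sat, hpr]
    congr! 2 with i
    exact Tm.eval_map hfn a (ts i) fun q hq => hF q (Set.mem_iUnion_of_mem i hq)
  | neg F ih => exact not_congr (ih hF a)
  | conj F G ihF ihG | disj F G ihF ihG =>
    simp only [Fml.sat]
    rw [ihF (fun q hq => hF q (Or.inl hq)), ihG (fun q hq => hF q (Or.inr hq))]
  | all y F ih =>
    simp only [Fml.sat, ih hF, Function.comp_update]
    exact (hh.forall (p := fun d => F.sat N (Function.update (h ∘ a) y d))).symm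
  | exi y F ih =>
    simp only [Fml.sat, ih hF, Function.comp_update]
    exact (hh.exists (p := fun d => F.sat N (Function.update (h ∘ a) y d))).symm

end Transfer

theorem Fml.sat_agreeExcept {D : Type} {M M' : Struc D} {S : Set (ℕ × ℕ)}
    (hM : agreeExcept M M' S) (F : Fml) (hF : ∀ q ∈ F.funs, q ∉ S) (a : ℕ → D) :
    F.sat M' a ↔ F.sat M a :=
  Fml.sat_map (h := id) Function.surjective_id (fun f m _ hfm => by simp [hM.2 f m hfm])
    (fun _ _ _ => by rw [hM.1]; rfl) F hF a

theorem Fml.preds_subst_s11 (σ : Subst) (F : Fml) (pol : Bool) :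
    (F.subst σ).preds pol = F.preds pol := by
  induction F generalizing σ pol <;> simp only [Fml.subst, Fml.preds, *]

theorem Fml.preds_inv (σ : Subst) (F : Fml) (pol : Bool) :
    (F.inv σ).preds pol = F.preds pol := by
  induction F generalizing pol <;> simp only [Fml.inv, Fml.preds, *]

theorem Tm.funs_subst_s11 (σ : Subst) :
    ∀ t : Tm, (t.subst σ).funs ⊆ t.funs ∪ ⋃ x, (σ x).funs
  | .var x => fun _ hq => Or.inr (Set.mem_iUnion_of_mem x hq)
  | .app f m ts => by
    simp only [Tm.subst, Tm.funs]
    rintro q (rfl | hq)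
    · exact Or.inl (Set.mem_insert _ _)
    · obtain ⟨i, hi⟩ := Set.mem_iUnion.mp hq
      exact (Tm.funs_subst_s11 σ (ts i) hi).imp_left fun h =>
        Set.mem_insert_of_mem _ (Set.mem_iUnion_of_mem i h)

theorem Fml.funs_subst_s11 (σ : Subst) (F : Fml) :
    (F.subst σ).funs ⊆ F.funs ∪ ⋃ x, (σ x).funs := by
  induction F generalizing σ with
  | tru | fls => simp [Fml.subst, Fml.funs]
  | atom p m ts =>
    simp only [Fml.subst, Fml.funs, Set.iUnion_subset_iff]
    exact fun i => (Tm.funs_subst_s11 σ (ts i)).trans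
      (Set.union_subset_union_left _ (Set.subset_iUnion (fun i => (ts i).funs) i))
  | neg F ih => exact ih σ
  | conj F G ihF ihG | disj F G ihF ihG =>
    simp only [Fml.subst, Fml.funs, Set.union_subset_iff]
    exact ⟨(ihF σ).trans (by gcongr; exact Set.subset_union_left),
      (ihG σ).trans (by gcongr; exact Set.subset_union_right)⟩
  | all y F ih | exi y F ih =>
    refine (ih _).trans (Set.union_subset_union_right _ (Set.iUnion_subset fun x => ?_))
    by_cases hxy : x = y
    · simp [hxy, Tm.funs]
    · rw [Function.update_of_ne hxy]
      exact Set.subset_iUnion (fun x => (σ x).funs) x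

theorem Tm.subst_inv (σ : Subst) : ∀ t : Tm, t.isGround → (t.inv σ).subst σ = t
  | .var x, ht => absurd ht (Set.singleton_ne_empty x)
  | .app f m ts, ht => by
    rw [Tm.inv]
    split_ifs with h
    · exact h.choose_spec.2
    · simp only [Tm.subst]
      congr 1
      funext i
      exact Tm.subst_inv σ (ts i) (ht.arg i)

theorem Fml.subst_inv (σ : Subst) {F : Fml} (hF : F.isGround) : (F.inv σ).subst σ = F := by
  obtain ⟨hqf, hfree⟩ := hF
  induction F with
  | tru | fls => rfl
  | atom p m ts =>
    simp only [Fml.inv, Fml.subst]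
    congr 1
    funext i
    exact Tm.subst_inv σ (ts i) (Set.iUnion_eq_empty.mp hfree i)
  | neg F ih => simp only [Fml.inv, Fml.subst, ih hqf hfree]
  | conj F G ihF ihG | disj F G ihF ihG =>
    rw [Fml.free, Set.union_empty_iff] at hfree
    simp only [Fml.inv, Fml.subst, ihF hqf.1 hfree.1, ihG hqf.2 hfree.2]
  | all | exi => exact hqf.elim

theorem Tm.vars_inv (σ : Subst) : ∀ t : Tm, (t.inv σ).vars ⊆ t.vars ∪ σ.dom
  | .var x => by
    rw [Tm.inv]
    split_ifs with h
    · exact fun y hy => Or.inr (hy ▸ h.choose_spec.1)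
    · exact Set.subset_union_left
  | .app f m ts => by
    rw [Tm.inv]
    split_ifs with h
    · exact fun y hy => Or.inr (hy ▸ h.choose_spec.1)
    · simp only [Tm.vars, Set.iUnion_subset_iff]
      exact fun i => (Tm.vars_inv σ (ts i)).trans
        (Set.union_subset_union_left _ (Set.subset_iUnion (fun i => (ts i).vars) i))

theorem Fml.free_inv (σ : Subst) (F : Fml) : (F.inv σ).free ⊆ F.free ∪ σ.dom := by
  induction F with
  | tru | fls => simp [Fml.inv, Fml.free]
  | atom p m ts =>
    simp only [Fml.inv, Fml.free, Set.iUnion_subset_iff]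
    exact fun i => (Tm.vars_inv σ (ts i)).trans
      (Set.union_subset_union_left _ (Set.subset_iUnion (fun i => (ts i).vars) i))
  | neg F ih => exact ih
  | conj F G ihF ihG | disj F G ihF ihG =>
    simp only [Fml.inv, Fml.free, Set.union_subset_iff]
    exact ⟨ihF.trans (by gcongr; exact Set.subset_union_left),
      ihG.trans (by gcongr; exact Set.subset_union_right)⟩
  | all y F ih | exi y F ih =>
    rintro x ⟨hx, hxy⟩
    exact (ih hx).imp_left fun h => ⟨h, hxy⟩

theorem Tm.funs_inv (σ : Subst) (S : Set (ℕ × ℕ)) : ∀ t : Tm,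
    (∀ u, isSTerm S u → Tm.hasMaxOcc (STerms S) u t → u ∈ σ.rng) → (t.inv σ).funs ⊆ t.funs \ S
  | .var x, _ => by
    rw [Tm.inv]
    split_ifs <;> simp [Tm.funs]
  | .app f m ts, hmax => by
    rw [Tm.inv]
    split_ifs with h
    · simp [Tm.funs]
    have hfm : (f, m) ∉ S := fun hS => h (hmax _ hS (Or.inl ⟨hS, rfl⟩))
    simp only [Tm.funs]
    rintro q (rfl | hq)
    · exact ⟨Set.mem_insert _ _, hfm⟩
    · obtain ⟨i, hi⟩ := Set.mem_iUnion.mp hq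
      obtain ⟨hqi, hqS⟩ := Tm.funs_inv σ S (ts i)
        (fun u hu hocc => hmax u hu (Or.inr ⟨hfm, i, hocc⟩)) hi
      exact ⟨Set.mem_insert_of_mem _ (Set.mem_iUnion_of_mem i hqi), hqS⟩

theorem Fml.funs_inv (σ : Subst) (S : Set (ℕ × ℕ)) (F : Fml)
    (hmax : ∀ u, isSTerm S u → F.hasMaxOcc (STerms S) u → u ∈ σ.rng) :
    (F.inv σ).funs ⊆ F.funs \ S := by
  induction F with
  | tru | fls => simp [Fml.inv, Fml.funs]
  | atom p m ts =>
    simp only [Fml.inv, Fml.funs, Set.iUnion_subset_iff]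
    exact fun i => (Tm.funs_inv σ S (ts i) fun u hu hocc => hmax u hu ⟨i, hocc⟩).trans
      (Set.sdiff_subset_sdiff_left (Set.subset_iUnion (fun i => (ts i).funs) i))
  | neg F ih | all _ F ih | exi _ F ih => exact ih hmax
  | conj F G ihF ihG | disj F G ihF ihG =>
    simp only [Fml.inv, Fml.funs, Set.union_subset_iff]
    exact ⟨(ihF fun u hu hocc => hmax u hu (Or.inl hocc)).trans
        (Set.sdiff_subset_sdiff_left Set.subset_union_left),
      (ihG fun u hu hocc => hmax u hu (Or.inr hocc)).trans
        (Set.sdiff_subset_sdiff_left Set.subset_union_right)⟩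

theorem Tm.vars_subset_of_hasMaxOcc {T : Set Tm} {t : Tm} :
    ∀ s : Tm, Tm.hasMaxOcc T t s → t.vars ⊆ s.vars
  | .var _, h => by rw [h.2]
  | .app f m ts, h => by
    rcases h with ⟨_, rfl⟩ | ⟨_, i, hi⟩
    · exact subset_rfl
    · exact (Tm.vars_subset_of_hasMaxOcc (ts i) hi).trans
        (Set.subset_iUnion (fun i => (ts i).vars) i)

theorem Fml.vars_subset_free_of_hasMaxOcc {T : Set Tm} {t : Tm} {F : Fml} (hF : F.isQF)
    (h : F.hasMaxOcc T t) : t.vars ⊆ F.free := by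
  induction F with
  | tru | fls => exact h.elim
  | atom p m ts =>
    obtain ⟨i, hi⟩ := h
    exact (Tm.vars_subset_of_hasMaxOcc (ts i) hi).trans
      (Set.subset_iUnion (fun i => (ts i).vars) i)
  | neg F ih => exact ih hF h
  | conj F G ihF ihG | disj F G ihF ihG =>
    rcases h with h | h
    · exact (ihF hF.1 h).trans Set.subset_union_left
    · exact (ihG hF.2 h).trans Set.subset_union_right
  | all | exi => exact hF.elim

theorem Fml.isGround.isGround_of_hasMaxOcc {T : Set Tm} {t : Tm} {F : Fml} (hF : F.isGround)
    (h : F.hasMaxOcc T t) : t.isGround :=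
  Set.subset_eq_empty (Fml.vars_subset_free_of_hasMaxOcc hF.1 h) hF.2

noncomputable def quantPrefix {n : ℕ} (v : Fin n → ℕ) (ex : Fin n → Prop) (l : List (Fin n))
    (body : Fml) : Fml :=
  l.foldr (fun i acc => if ex i then Fml.exi (v i) acc else Fml.all (v i) acc) body

section QuantPrefix

variable {n : ℕ} (v : Fin n → ℕ) (ex : Fin n → Prop) (body : Fml)

theorem lifted_eq_quantPrefix (tl : Fin n → Tm) (FS : Set (ℕ × ℕ)) :
    lifted n v tl FS body = quantPrefix v (fun i => isSTerm FS (tl i)) (List.finRange n) body :=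
  rfl

@[simp]
theorem quantPrefix_nil : quantPrefix v ex [] body = body := rfl

theorem quantPrefix_cons (i : Fin n) (l : List (Fin n)) :
    quantPrefix v ex (i :: l) body =
      if ex i then .exi (v i) (quantPrefix v ex l body) else .all (v i) (quantPrefix v ex l body) :=
  rfl

theorem funs_quantPrefix (l : List (Fin n)) : (quantPrefix v ex l body).funs = body.funs := by
  induction l with
  | nil => rfl
  | cons i l ih => rw [quantPrefix_cons]; split_ifs <;> exact ih

theorem preds_quantPrefix (l : List (Fin n)) (pol : Bool) :
    (quantPrefix v ex l body).preds pol = body.preds pol := by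
  induction l with
  | nil => rfl
  | cons i l ih => rw [quantPrefix_cons]; split_ifs <;> exact ih

theorem free_quantPrefix (l : List (Fin n)) :
    (quantPrefix v ex l body).free = body.free \ {x | ∃ i ∈ l, v i = x} := by
  induction l with
  | nil => simp
  | cons i l ih =>
    rw [quantPrefix_cons]
    split_ifs <;>
    · ext x
      simp only [Fml.free, ih, List.mem_cons, Set.mem_sdiff, Set.mem_ofPred_eq,
        Set.mem_singleton_iff]
      grind

theorem sat_quantPrefix_neg_iff {D : Type} (M : Struc D) (l : List (Fin n)) (a : ℕ → D) :
    (quantPrefix v (fun i => ¬ ex i) l (.neg body)).sat M a ↔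
      ¬ (quantPrefix v ex l body).sat M a := by
  induction l generalizing a with
  | nil => rfl
  | cons i l ih =>
    simp only [quantPrefix_cons]
    split_ifs <;> simp [Fml.sat, ih]

end QuantPrefix

/-- The second component records the ground term being evaluated, so that the value of the
single term `t` can be redefined to `d` without affecting any term in which `t` does not occur. -/
noncomputable def Struc.override {D : Type} (N : Struc D) (t : Tm) (d : D) : Struc (D × Tm) where
  fn f m p :=
    (if Tm.app f m (fun q => (p q).2) = t then d else N.fn f m (fun q => (p q).1),
      Tm.app f m (fun q => (p q).2))
  pr p m q := N.pr p m (fun r => (q r).1)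

namespace Struc

variable {D : Type} (N : Struc D) (t : Tm) (d : D) (b : ℕ → D × Tm)

theorem override_eval_app (f m : ℕ) (ts : Fin m → Tm) :
    (Tm.app f m ts).eval (N.override t d) b =
      (if Tm.app f m (fun i => ((ts i).eval (N.override t d) b).2) = t then d
        else N.fn f m (fun i => ((ts i).eval (N.override t d) b).1),
        Tm.app f m (fun i => ((ts i).eval (N.override t d) b).2)) :=
  rfl

theorem override_eval_snd : ∀ s : Tm, s.isGround → (s.eval (N.override t d) b).2 = s
  | .var x, hs => absurd hs (Set.singleton_ne_empty x)
  | .app f m ts, hs => by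
    rw [override_eval_app]
    exact congrArg _ (funext fun i => override_eval_snd (ts i) (hs.arg i))

theorem override_eval_args {f m : ℕ} {ts : Fin m → Tm} (hs : (Tm.app f m ts).isGround) :
    (fun i => ((ts i).eval (N.override t d) b).2) = ts :=
  funext fun i => N.override_eval_snd t d b (ts i) (hs.arg i)

theorem override_eval_self (ht : t.isGround) : (t.eval (N.override t d) b).1 = d := by
  cases t with
  | var x => exact absurd ht (Set.singleton_ne_empty x)
  | app f m ts =>
    rw [override_eval_app, N.override_eval_args _ d b ht]
    exact if_pos rfl

theorem override_eval_of_not_occursIn (a : ℕ → D) :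
    ∀ s : Tm, s.isGround → ¬ t.occursIn s → (s.eval (N.override t d) b).1 = s.eval N a
  | .var x, hs, _ => absurd hs (Set.singleton_ne_empty x)
  | .app f m ts, hs, hts => by
    simp only [Tm.occursIn, not_or, not_exists] at hts
    rw [override_eval_app, N.override_eval_args t d b hs]
    simp only [Tm.eval, if_neg (Ne.symm hts.1)]
    congr 1
    funext i
    exact override_eval_of_not_occursIn a (ts i) (hs.arg i) (hts.2 i)

theorem sat_override_iff {S : Set (ℕ × ℕ)} (ht : isSTerm S t) (E : Fml)
    (hE : ∀ q ∈ E.funs, q ∉ S) : E.sat (N.override t d) b ↔ E.sat N (Prod.fst ∘ b) := by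
  refine Fml.sat_map (fun x => ⟨(x, .var 0), rfl⟩) (fun f m p hfm => ?_) (fun _ _ _ => Iff.rfl)
    E hE b
  refine if_neg fun h => hfm ?_
  cases t with
  | var => exact ht.elim
  | app g k us =>
    cases h
    exact ht

end Struc

instance : Nonempty Tm := ⟨.var 0⟩

structure GroundAbstraction {n : ℕ} (v : Fin n → ℕ) (tl : Fin n → Tm) (σ : Subst) : Prop where
  injective : Function.Injective tl
  lt_of_strictSub : ∀ i j, (tl i).strictSub (tl j) → i < j
  subst_eq : ∀ i, σ (v i) = tl i
  subst_eq_var : ∀ x, (∀ i, v i ≠ x) → σ x = .var x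
  isGround : ∀ i, (tl i).isGround

namespace GroundAbstraction

variable {n : ℕ} {v : Fin n → ℕ} {tl : Fin n → Tm} {σ : Subst}

theorem injective_var (hA : GroundAbstraction v tl σ) : Function.Injective v :=
  fun i j h => hA.injective (by rw [← hA.subst_eq, ← hA.subst_eq, h])

theorem not_occursIn_of_lt (hA : GroundAbstraction v tl σ) {i j : Fin n} (hij : i < j) :
    ¬ (tl j).occursIn (tl i) := fun hocc => by
  by_cases he : tl j = tl i
  · exact hij.ne (hA.injective he).symm
  · exact (hA.lt_of_strictSub j i ⟨he, hocc⟩).not_gt hij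

theorem exists_eq_of_mem_dom (hA : GroundAbstraction v tl σ) {x : ℕ} (hx : x ∈ σ.dom) :
    ∃ i, v i = x := by
  by_contra! h
  exact hx (hA.subst_eq_var x h)

theorem mem_rng (hA : GroundAbstraction v tl σ) (i : Fin n) : tl i ∈ σ.rng := by
  refine ⟨v i, fun h => ?_, hA.subst_eq i⟩
  have hground := hA.isGround i
  rw [← hA.subst_eq i, h] at hground
  exact Set.singleton_ne_empty _ hground

theorem subst_isGround (hA : GroundAbstraction v tl σ) : σ.isGround := fun x hx => by
  obtain ⟨i, rfl⟩ := hA.exists_eq_of_mem_dom hx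
  exact hA.subst_eq i ▸ hA.isGround i

theorem eval_subst_eq {D : Type} (hA : GroundAbstraction v tl σ) (N : Struc D) {a : ℕ → D}
    (ha : ∀ j, a (v j) = (tl j).eval N a) : (fun x => (σ x).eval N a) = a := by
  funext x
  by_cases hx : ∃ j, v j = x
  · obtain ⟨j, rfl⟩ := hx
    rw [hA.subst_eq, ha]
  · rw [hA.subst_eq_var x (not_exists.mp hx)]
    rfl

theorem sat_quantPrefix_of_agree (hA : GroundAbstraction v tl σ) {XS : Set (ℕ × ℕ)} {W K : Fml}
    {ex : Fin n → Prop} (hex : ∀ i, ¬ ex i → isSTerm XS (tl i))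
    (hW : ∀ q ∈ W.funs, q ∉ XS) (hK : ∀ q ∈ K.funs, q ∉ XS)
    (hWK : ∀ (D : Type) [Nonempty D] (N : Struc D), (∀ b, W.sat N b) → ∀ b, (K.subst σ).sat N b)
    (l : List (Fin n)) (hl : l.Pairwise (· < ·)) (hlt : ∀ j ∉ l, ∀ i ∈ l, j < i)
    {D : Type} [Nonempty D] (N : Struc D) (hN : ∀ b, W.sat N b) (a : ℕ → D)
    (ha : ∀ j ∉ l, a (v j) = (tl j).eval N a) :
    (quantPrefix v ex l K).sat N a := by
  induction l generalizing D with
  | nil =>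
    have := hWK D N hN a
    rwa [Fml.sat_subst_s11 N K hA.subst_isGround,
      hA.eval_subst_eq N fun j => ha j List.not_mem_nil] at this
  | cons i l ih =>
    obtain ⟨hil, hl⟩ := List.pairwise_cons.mp hl
    have hmem {j : Fin n} (hj : j ∉ l) (hji : j ≠ i) : j ∉ i :: l := by simp [hji, hj]
    have hlt' : ∀ j ∉ l, ∀ k ∈ l, j < k := fun j hj k hk => by
      by_cases hji : j = i
      · exact hji ▸ hil k hk
      · exact hlt j (hmem hj hji) k (List.mem_cons_of_mem i hk)
    have hupd {D : Type} (a : ℕ → D) (d : D) {j : Fin n} (hji : j ≠ i) :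
        Function.update a (v i) d (v j) = a (v j) :=
      Function.update_of_ne (hA.injective_var.ne hji) _ _
    rw [quantPrefix_cons]
    split_ifs with hexi
    · refine ⟨(tl i).eval N a, ih hl hlt' N hN _ fun j hj => ?_⟩
      rw [Tm.eval_of_isGround N (hA.isGround j) _ a]
      by_cases hji : j = i
      · subst hji
        exact Function.update_self ..
      · rw [hupd a _ hji, ha j (hmem hj hji)]
    · intro d
      have hXS := hex i hexi
      have hN' : ∀ b, W.sat (N.override (tl i) d) b := fun b =>
        (N.sat_override_iff _ d b hXS W hW).2 (hN _)
      have hsat := ih hl hlt' (N.override (tl i) d) hN'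
        (fun x => (Function.update a (v i) d x, σ x)) fun j hj => by
          refine Prod.ext ?_ ?_
          · by_cases hji : j = i
            · subst hji
              rw [N.override_eval_self _ _ _ (hA.isGround j)]
              exact Function.update_self ..
            · rw [N.override_eval_of_not_occursIn _ _ _ a _ (hA.isGround j)
                (hA.not_occursIn_of_lt (hlt j (hmem hj hji) i List.mem_cons_self))]
              exact (hupd a d hji).trans (ha j (hmem hj hji))
          · exact (hA.subst_eq j).trans (N.override_eval_snd _ _ _ _ (hA.isGround j)).symm
      exact (N.sat_override_iff _ d _ hXS _ (by rwa [funs_quantPrefix])).1 hsat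

theorem sat_quantPrefix (hA : GroundAbstraction v tl σ) {XS : Set (ℕ × ℕ)} {W K : Fml}
    {ex : Fin n → Prop} (hex : ∀ i, ¬ ex i → isSTerm XS (tl i))
    (hW : ∀ q ∈ W.funs, q ∉ XS) (hK : ∀ q ∈ K.funs, q ∉ XS)
    (hWK : ∀ (D : Type) [Nonempty D] (N : Struc D), (∀ b, W.sat N b) → ∀ b, (K.subst σ).sat N b)
    {D : Type} [Nonempty D] (N : Struc D) (hN : ∀ b, W.sat N b) (a : ℕ → D) :
    (quantPrefix v ex (List.finRange n) K).sat N a :=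
  hA.sat_quantPrefix_of_agree hex hW hK hWK _ (List.pairwise_lt_finRange n)
    (fun j hj => absurd (List.mem_finRange j) hj) N hN a
    (fun j hj => absurd (List.mem_finRange j) hj)

theorem free_quantPrefix_inv (hA : GroundAbstraction v tl σ) (ex : Fin n → Prop) {H : Fml}
    (hH : H.free = ∅) : (quantPrefix v ex (List.finRange n) (H.inv σ)).free = ∅ := by
  rw [free_quantPrefix, Set.sdiff_eq_empty]
  intro x hx
  obtain ⟨i, rfl⟩ := hA.exists_eq_of_mem_dom (by simpa [hH] using Fml.free_inv σ H hx)
  exact ⟨i, List.mem_finRange i, rfl⟩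

end GroundAbstraction

theorem isSTerm_union_iff {S T : Set (ℕ × ℕ)} {t : Tm} :
    isSTerm (S ∪ T) t ↔ isSTerm S t ∨ isSTerm T t := by
  cases t <;> simp [isSTerm]

namespace IsLiftBase

variable {F G : Fml} {FS GS : Set (ℕ × ℕ)} {Hg Fe Ge : Fml} {θ : Subst}

theorem notMem_right_of_mem_funs (hbase : IsLiftBase F G FS GS Hg Fe Ge θ) {q : ℕ × ℕ}
    (hq : q ∈ F.funs) : q ∉ GS := fun hGS => by
  have ⟨_, _, _, _, _, _, _, _, _, _, _, _, _, hFGS, _⟩ := hbase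
  exact Set.eq_empty_iff_forall_notMem.1 hFGS q ⟨hq, hGS⟩

theorem notMem_left_of_mem_funs (hbase : IsLiftBase F G FS GS Hg Fe Ge θ) {q : ℕ × ℕ}
    (hq : q ∈ G.funs) : q ∉ FS := fun hFS => by
  have ⟨_, _, _, _, _, _, _, _, _, _, _, _, _, _, hGFS, _⟩ := hbase
  exact Set.eq_empty_iff_forall_notMem.1 hGFS q ⟨hq, hFS⟩

theorem notMem_right_of_mem_funs_exp (hbase : IsLiftBase F G FS GS Hg Fe Ge θ) {q : ℕ × ℕ}
    (hq : q ∈ Fe.funs) : q ∉ GS := by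
  have ⟨_, _, hFSGS, _, _, _, _, _, _, _, _, hFe, _⟩ := hbase
  rcases hFe hq with hq | hFS
  · exact hbase.notMem_right_of_mem_funs hq.1
  · exact fun hGS => Set.eq_empty_iff_forall_notMem.1 hFSGS q ⟨hFS, hGS⟩

theorem notMem_left_of_mem_funs_exp (hbase : IsLiftBase F G FS GS Hg Fe Ge θ) {q : ℕ × ℕ}
    (hq : q ∈ Ge.funs) : q ∉ FS := by
  have ⟨_, _, hFSGS, _, _, _, _, _, _, _, _, _, hGe, _⟩ := hbase
  rcases hGe hq with hq | hGS
  · exact hbase.notMem_left_of_mem_funs hq.2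
  · exact fun hFS => Set.eq_empty_iff_forall_notMem.1 hFSGS q ⟨hFS, hGS⟩

theorem funs_subset (hbase : IsLiftBase F G FS GS Hg Fe Ge θ) :
    Hg.funs ⊆ F.funs ∩ G.funs ∪ (FS ∪ GS) := by
  have ⟨_, _, _, _, _, _, _, _, _, _, _, hFe, hGe, _, _, _, ⟨c₀, hc₀, hθ⟩, _, _, _, hHg, _⟩ := hbase
  have hexp : Fe.funs ∪ Ge.funs ∪ {(c₀, 0)} ⊆ F.funs ∩ G.funs ∪ (FS ∪ GS) := by
    refine Set.union_subset (Set.union_subset ?_ ?_) (Set.singleton_subset_iff.2 (Or.inr hc₀))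
    · exact hFe.trans (Set.union_subset_union_right _ Set.subset_union_left)
    · exact hGe.trans (Set.union_subset_union_right _ Set.subset_union_right)
  intro q hq
  rcases Fml.funs_subst_s11 θ Fe (hHg hq).1 with hq | hq
  · exact hexp (Or.inl (Or.inl hq))
  · obtain ⟨x, hx⟩ := Set.mem_iUnion.mp hq
    by_cases hdom : x ∈ θ.dom
    · exact hexp (hθ x hdom hx)
    · rw [show θ x = .var x from not_not.mp hdom] at hx
      exact hx.elim

theorem funs_inv_subset (hbase : IsLiftBase F G FS GS Hg Fe Ge θ) {σ : Subst}
    (hrng : ∀ u, isSTerm (FS ∪ GS) u → Hg.hasMaxOcc (STerms (FS ∪ GS)) u → u ∈ σ.rng) :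
    (Hg.inv σ).funs ⊆ F.funs ∩ G.funs := fun _ hq =>
  have ⟨hHg, hS⟩ := Fml.funs_inv σ _ Hg hrng hq
  (hbase.funs_subset hHg).resolve_right hS

theorem pred_subset (hbase : IsLiftBase F G FS GS Hg Fe Ge θ) :
    Hg.pred ⊆ F.pred ∩ G.pred := by
  have ⟨_, _, _, _, _, _, _, _, _, hFe, hGe, _, _, _, _, _, _, _, _, hHg, _⟩ := hbase
  intro q hq
  obtain ⟨hqF, hqG⟩ := hHg hq
  rw [Fml.pred, Fml.preds_subst_s11] at hqF hqG
  exact ⟨hFe hqF, hGe hqG⟩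

theorem sat_of_forall_sat_left (hbase : IsLiftBase F G FS GS Hg Fe Ge θ) {D : Type}
    [Nonempty D] (N : Struc D) (hN : ∀ b, Fe.sat N b) (b : ℕ → D) : Hg.sat N b := by
  have ⟨_, _, _, _, _, _, hθ, _, _, _, _, _, _, _, _, _, _, hFeHg, _⟩ := hbase
  exact hFeHg D ‹_› N b ((Fml.sat_subst_s11 N Fe hθ b).2 (hN _))

theorem not_sat_of_forall_not_sat_right (hbase : IsLiftBase F G FS GS Hg Fe Ge θ) {D : Type}
    [Nonempty D] (N : Struc D) (hN : ∀ b, ¬ Ge.sat N b) (b : ℕ → D) : ¬ Hg.sat N b := by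
  have ⟨_, _, _, _, _, _, hθ, _, _, _, _, _, _, _, _, _, _, _, hHgGe, _⟩ := hbase
  exact fun h => hN _ ((Fml.sat_subst_s11 N Ge hθ b).1 (hHgGe D ‹_› N b h))

end IsLiftBase

section Lifting

variable {F G : Fml} {FS GS : Set (ℕ × ℕ)} {Hg Fe Ge : Fml} {θ : Subst}
  {n : ℕ} {v : Fin n → ℕ} {tl : Fin n → Tm} {σ : Subst}

theorem entails_lifted_left (hbase : IsLiftBase F G FS GS Hg Fe Ge θ)
    (hA : GroundAbstraction v tl σ) (htl : ∀ i, isSTerm (FS ∪ GS) (tl i))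
    (hK : (Hg.inv σ).funs ⊆ F.funs ∩ G.funs) : entails F (lifted n v tl FS (Hg.inv σ)) := by
  have ⟨hF, _, _, hHg, _, _, _, hFexp, _⟩ := hbase
  intro D hD M a hFa
  obtain ⟨M', hMM', hM'⟩ := hFexp D hD M (Fml.sat_of_isSentence_s11 M hF hFa)
  have hsat := hA.sat_quantPrefix (XS := GS) (ex := fun i => isSTerm FS (tl i))
    (fun i hi => (isSTerm_union_iff.1 (htl i)).resolve_left hi)
    (fun _ hq => hbase.notMem_right_of_mem_funs_exp hq)
    (fun _ hq => hbase.notMem_right_of_mem_funs (hK hq).1)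
    (fun D _ N hN b => by
      rw [Fml.subst_inv σ hHg]
      exact hbase.sat_of_forall_sat_left N hN b)
    M' hM' a
  rw [← lifted_eq_quantPrefix] at hsat
  exact (Fml.sat_agreeExcept hMM' _ (fun _ hq => hbase.notMem_left_of_mem_funs
    (hK (by rwa [lifted_eq_quantPrefix, funs_quantPrefix] at hq)).2) a).1 hsat

theorem entails_lifted_right (hbase : IsLiftBase F G FS GS Hg Fe Ge θ)
    (hA : GroundAbstraction v tl σ) (hK : (Hg.inv σ).funs ⊆ F.funs ∩ G.funs) :
    entails (lifted n v tl FS (Hg.inv σ)) G := by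
  have ⟨_, _, _, hHg, _, _, _, _, hGexp, _⟩ := hbase
  intro D hD M a hHa
  refine hGexp D hD M (fun M' hMM' => ?_) a
  by_contra! hM'
  have hsat := hA.sat_quantPrefix (XS := FS) (W := .neg Ge) (K := .neg (Hg.inv σ))
    (ex := fun i => ¬ isSTerm FS (tl i))
    (fun _ hi => not_not.1 hi)
    (fun _ hq => hbase.notMem_left_of_mem_funs_exp hq)
    (fun _ hq => hbase.notMem_left_of_mem_funs (hK hq).2)
    (fun D _ N hN b => by
      rw [Fml.subst, Fml.subst_inv σ hHg]
      exact hbase.not_sat_of_forall_not_sat_right N hN b)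
    M' hM' a
  rw [sat_quantPrefix_neg_iff, ← lifted_eq_quantPrefix] at hsat
  exact hsat ((Fml.sat_agreeExcept hMM' _ (fun _ hq => hbase.notMem_right_of_mem_funs
    (hK (by rwa [lifted_eq_quantPrefix, funs_quantPrefix] at hq)).1) a).2 hHa)

end Lifting

theorem statement11_general (F G : Fml) (FS GS : Set (ℕ × ℕ)) (Hg Fe Ge : Fml) (θ : Subst)
    (hbase : IsLiftBase F G FS GS Hg Fe Ge θ)
    (n : ℕ) (tl : Fin n → Tm)
    (htl_inj : Function.Injective tl)
    (htl_range : ∀ t : Tm, (∃ i, tl i = t) ↔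
      (isSTerm (FS ∪ GS) t ∧ Fml.hasMaxOcc (STerms (FS ∪ GS)) t Hg))
    (horder : ∀ i j, Tm.strictSub (tl i) (tl j) → i < j)
    (v : Fin n → ℕ)
    (σ : Subst)
    (hσ : ∀ i, σ (v i) = tl i)
    (hσ' : ∀ x : ℕ, (∀ i, v i ≠ x) → σ x = Tm.var x) :
    CLInterp F G (lifted n v tl FS (Fml.inv σ Hg)) := by
  have ⟨_, _, _, hHg, _⟩ := hbase
  have htl i := (htl_range (tl i)).1 ⟨i, rfl⟩
  have hA : GroundAbstraction v tl σ :=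
    ⟨htl_inj, horder, hσ, hσ', fun i => hHg.isGround_of_hasMaxOcc (htl i).2⟩
  have hK : (Hg.inv σ).funs ⊆ F.funs ∩ G.funs := hbase.funs_inv_subset fun u hu hocc => by
    obtain ⟨i, rfl⟩ := (htl_range u).2 ⟨hu, hocc⟩
    exact hA.mem_rng i
  refine ⟨entails_lifted_left hbase hA (fun i => (htl i).1) hK, entails_lifted_right hbase hA hK,
    ?_, ?_, ?_⟩ <;> rw [lifted_eq_quantPrefix]
  · rw [Fml.pred, preds_quantPrefix, Fml.preds_inv]
    exact hbase.pred_subset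
  · rw [funs_quantPrefix]
    exact hK
  · rw [hA.free_quantPrefix_inv _ hHg.2]
    exact Set.empty_subset _

/-- Interpolant lifting: given the first five components F, G, 𝔽, 𝔾, H_grd of an
interpolant lifting base (whose remaining components F_exp, G_exp, θ exist), let
t₁,…,tₙ be the 𝔽𝔾-terms with an 𝔽𝔾-terms-maximal occurrence in H_grd, listed so
that strict subterms come first, let v₁,…,vₙ be fresh (distinct) variables, let σ be
the injective substitution vᵢ ↦ tᵢ, and let Qᵢ = ∃ if tᵢ is an 𝔽-term and Qᵢ = ∀ if
it is a 𝔾-term.  Conclusion: Q₁v₁ … Qₙvₙ H_grd⁻σ relates to F and G as stated. -/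
theorem statement11 (F G : Fml) (FS GS : Set (ℕ × ℕ)) (Hg Fe Ge : Fml) (θ : Subst)
    (hbase : IsLiftBase F G FS GS Hg Fe Ge θ)
    (n : ℕ) (tl : Fin n → Tm)
    (htl_inj : Function.Injective tl)
    (htl_range : ∀ t : Tm, (∃ i, tl i = t) ↔
      (isSTerm (FS ∪ GS) t ∧ Fml.hasMaxOcc (STerms (FS ∪ GS)) t Hg))
    (horder : ∀ i j, Tm.strictSub (tl i) (tl j) → i < j)
    (v : Fin n → ℕ) (hv : Function.Injective v)
    (σ : Subst)
    (hσ : ∀ i, σ (v i) = tl i)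
    (hσ' : ∀ x : ℕ, (∀ i, v i ≠ x) → σ x = Tm.var x) :
    CLInterp F G (lifted n v tl FS (Fml.inv σ Hg)) :=
  statement11_general F G FS GS Hg Fe Ge θ hbase n tl htl_inj htl_range horder v σ hσ hσ'

end CTIF
end
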